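/- arXiv:1402.7215 — 11 statements merged into one kernel-verified Lean document; each statement's English description precedes it below -/
import Mathlib

section
/- Let x1 < x2, let a, k1, kbar1 : [x1,x2] → ℝ be continuous and strictly positive, let the inheritance kernel be the separable kernel k(x,y) = k1(x)·kbar1(y), let β ≥ 0, K, μ > 0, and set w = (μ·∫_{x1}^{x2} k1(x)/a(x) dx)/(K·∫_{x1}^{x2} k1(x) dx). If β·w < 1, then the model admits a unique positive stationary state (z*, F*); moreover it is given explicitly by z*(x) = μ·k1(x)/(K·(1−βw)·a(x)·∫_{x1}^{x2} k1(s) ds), Z* = ∫_{x1}^{x2} z*(x) dx = w/(1−βw), and F* = (1/(1−βw))·∫_{x1}^{x2} k1(x)·kbar1(x)/a(x) dx. -/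
open MeasureTheory Set

/-!
For a separable kernel the left side of the stationary equation is `k1 x · ∫ kbar1 z`, so every
stationary state is a multiple `c · k1 / a` of one fixed profile, and conversely such a multiple is
a stationary state as soon as `c` and `F` satisfy two scalar equations. The prey equation forces
`F = (1 + β Z) ∫ k1 kbar1 / a` with `Z = c ∫ k1 / a`, and the predator equation becomes
`(1 + β Z) (1 - β w) = 1`, whose only solution is `c = μ / (K (1 - β w) ∫ k1)`, positive
because `β w < 1`.
-/

/-- A positive stationary state of the structured predator–prey model
on the trait interval `[x1, x2]` with kernel `k`, vulnerability `a`,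
saturation `β`, conversion coefficient `K` and predator mortality `μ`. -/
def IsPositiveStationaryState (x1 x2 β K μ : ℝ) (k : ℝ → ℝ → ℝ) (a : ℝ → ℝ)
    (z : ℝ → ℝ) (F : ℝ) : Prop :=
  IntegrableOn z (Icc x1 x2) ∧
  (∀ᵐ x ∂(volume.restrict (Icc x1 x2)), 0 < z x) ∧
  0 < F ∧
  (∀ᵐ x ∂(volume.restrict (Icc x1 x2)),
    (∫ y in Icc x1 x2, k x y * z y)
      = F * a x * z x / (1 + β * ∫ s in Icc x1 x2, z s)) ∧
  μ / K = (∫ x in Icc x1 x2, a x * z x) / (1 + β * ∫ s in Icc x1 x2, z s)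

theorem integral_pos_of_ae_pos {α : Type*} [MeasurableSpace α] {μ : Measure α} [NeZero μ]
    {f : α → ℝ} (hfi : Integrable f μ) (hf : ∀ᵐ x ∂μ, 0 < f x) : 0 < ∫ x, f x ∂μ := by
  have hsupp : Function.support f =ᵐ[μ] (univ : Set α) :=
    Filter.eventuallyEq_univ.mpr (hf.mono fun _ h => h.ne')
  rw [integral_pos_iff_support_of_nonneg_ae (hf.mono fun _ h => h.le) hfi, measure_congr hsupp]
  exact Measure.measure_univ_pos.mpr (NeZero.ne μ)

theorem setIntegral_pos_of_ae_pos {α : Type*} [MeasurableSpace α] {μ : Measure α} {s : Set α}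
    (hs : μ s ≠ 0) {f : α → ℝ} (hfi : IntegrableOn f s μ) (hf : ∀ᵐ x ∂μ.restrict s, 0 < f x) :
    0 < ∫ x in s, f x ∂μ :=
  have : NeZero (μ s) := ⟨hs⟩
  integral_pos_of_ae_pos hfi hf

theorem ContinuousOn.setIntegral_Icc_pos {x1 x2 : ℝ} (hx : x1 < x2) {f : ℝ → ℝ}
    (hfC : ContinuousOn f (Icc x1 x2)) (hfP : ∀ x ∈ Icc x1 x2, 0 < f x) :
    0 < ∫ x in Icc x1 x2, f x :=
  setIntegral_pos_of_ae_pos (by simp [hx]) hfC.integrableOn_Icc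
    (ae_restrict_of_forall_mem measurableSet_Icc hfP)

theorem scale_mul_eq_div_one_sub {β K μ I1 Ia w : ℝ} (hw : w = μ * Ia / (K * I1)) :
    μ / (K * (1 - β * w) * I1) * Ia = w / (1 - β * w) := by
  calc μ / (K * (1 - β * w) * I1) * Ia = μ * Ia / (K * I1) / (1 - β * w) := by
        simp only [div_eq_mul_inv, mul_inv]; ring
    _ = w / (1 - β * w) := by rw [hw]

theorem consistency_iff_eq_scale {β K μ I1 Ia w c : ℝ} (hK : K ≠ 0) (hμ : μ ≠ 0)
    (hI1 : I1 ≠ 0) (hw : w = μ * Ia / (K * I1)) (hβw : β * w ≠ 1) :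
    μ / K = c * I1 / (1 + β * (c * Ia)) ↔ c = μ / (K * (1 - β * w) * I1) := by
  have hE : 1 - β * w ≠ 0 := sub_ne_zero.mpr hβw.symm
  constructor
  · intro h
    have hD : 1 + β * (c * Ia) ≠ 0 := by
      rintro hD
      rw [hD, div_zero, div_eq_zero_iff] at h
      tauto
    rw [div_eq_div_iff hK hD] at h
    have hwKI : w * (K * I1) = μ * Ia := by rw [hw]; field_simp
    have hDE : (1 + β * (c * Ia)) * (1 - β * w) = 1 := by
      refine mul_right_cancel₀ (mul_ne_zero hK hI1) ?_
      linear_combination (-β * (1 + β * (c * Ia))) * hwKI - β * Ia * h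
    rw [eq_div_iff (by positivity)]
    linear_combination (-(1 - β * w)) * h + μ * hDE
  · rintro rfl
    rw [scale_mul_eq_div_one_sub hw]
    field_simp
    ring

section SeparableKernel

variable {x1 x2 β K μ : ℝ} {a k1 kbar1 z : ℝ → ℝ} {c : ℝ}

theorem setIntegral_mul_eq_of_ae_eq_scaled_profile
    (hz : z =ᵐ[volume.restrict (Icc x1 x2)] fun x => c * (k1 x / a x))
    (h f : ℝ → ℝ) (hf : ∀ x ∈ Icc x1 x2, h x * (k1 x / a x) = f x) :
    ∫ x in Icc x1 x2, h x * z x = c * ∫ x in Icc x1 x2, f x := by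
  rw [← integral_const_mul]
  refine integral_congr_ae ?_
  filter_upwards [hz, ae_restrict_mem measurableSet_Icc] with x hzx hx
  rw [hzx, ← hf x hx]
  ring

theorem IsPositiveStationaryState.exists_scaled_profile_of_separable (hx : x1 < x2)
    (haP : ∀ x ∈ Icc x1 x2, 0 < a x) (hkbar1C : ContinuousOn kbar1 (Icc x1 x2))
    (hkbar1P : ∀ x ∈ Icc x1 x2, 0 < kbar1 x) (hβ : 0 ≤ β) {F : ℝ}
    (h : IsPositiveStationaryState x1 x2 β K μ (fun x y => k1 x * kbar1 y) a z F) :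
    ∃ c, z =ᵐ[volume.restrict (Icc x1 x2)] (fun x => c * (k1 x / a x)) ∧
      F = (1 + β * (c * ∫ x in Icc x1 x2, k1 x / a x)) *
        ∫ x in Icc x1 x2, k1 x * kbar1 x / a x ∧
      μ / K = c * (∫ x in Icc x1 x2, k1 x) / (1 + β * (c * ∫ x in Icc x1 x2, k1 x / a x)) := by
  obtain ⟨hzi, hzpos, hF, hstat, hcons⟩ := h
  set Z := ∫ x in Icc x1 x2, z x with hZdef
  set C := ∫ y in Icc x1 x2, kbar1 y * z y with hCdef
  have hD : 0 < 1 + β * Z := by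
    have : 0 ≤ Z := integral_nonneg_of_ae (hzpos.mono fun _ h => h.le)
    positivity
  have hC : 0 < C := by
    refine setIntegral_pos_of_ae_pos (by simp [hx]) (hzi.continuousOn_mul hkbar1C isCompact_Icc) ?_
    filter_upwards [hzpos, ae_restrict_mem measurableSet_Icc] with y hy hym
    exact mul_pos (hkbar1P y hym) hy
  set c := (1 + β * Z) * C / F
  have hz : z =ᵐ[volume.restrict (Icc x1 x2)] fun x => c * (k1 x / a x) := by
    filter_upwards [hstat, ae_restrict_mem measurableSet_Icc] with x hxs hxm
    simp only [mul_assoc, integral_const_mul, ← hCdef] at hxs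
    rw [show c * (k1 x / a x) = (1 + β * Z) * (k1 x * C) / (F * a x) by ring, hxs]
    field_simp [(haP x hxm).ne']
  have hZ : Z = c * ∫ x in Icc x1 x2, k1 x / a x := by
    rw [hZdef, integral_congr_ae hz, integral_const_mul]
  have hCc : C = c * ∫ x in Icc x1 x2, k1 x * kbar1 x / a x :=
    setIntegral_mul_eq_of_ae_eq_scaled_profile hz _ _ fun x _ => by ring
  have haz : ∫ x in Icc x1 x2, a x * z x = c * ∫ x in Icc x1 x2, k1 x :=
    setIntegral_mul_eq_of_ae_eq_scaled_profile hz _ _ fun x hx => by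
      field_simp [(haP x hx).ne']
  refine ⟨c, hz, ?_, by rwa [← hZ, ← haz]⟩
  rw [← hZ]
  simp only [c] at hCc
  field_simp at hCc
  exact hCc

theorem isPositiveStationaryState_of_scaled_profile_of_separable (hx : x1 < x2)
    (haC : ContinuousOn a (Icc x1 x2)) (haP : ∀ x ∈ Icc x1 x2, 0 < a x)
    (hk1C : ContinuousOn k1 (Icc x1 x2)) (hk1P : ∀ x ∈ Icc x1 x2, 0 < k1 x)
    (hkbar1C : ContinuousOn kbar1 (Icc x1 x2)) (hkbar1P : ∀ x ∈ Icc x1 x2, 0 < kbar1 x)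
    (hβ : 0 ≤ β) {F : ℝ} (hc : 0 < c)
    (hz : z =ᵐ[volume.restrict (Icc x1 x2)] fun x => c * (k1 x / a x))
    (hF : F = (1 + β * (c * ∫ x in Icc x1 x2, k1 x / a x)) *
      ∫ x in Icc x1 x2, k1 x * kbar1 x / a x)
    (hcons : μ / K =
      c * (∫ x in Icc x1 x2, k1 x) / (1 + β * (c * ∫ x in Icc x1 x2, k1 x / a x))) :
    IsPositiveStationaryState x1 x2 β K μ (fun x y => k1 x * kbar1 y) a z F := by
  have ha0 : ∀ x ∈ Icc x1 x2, a x ≠ 0 := fun x hx => (haP x hx).ne'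
  have hgC : ContinuousOn (fun x => k1 x / a x) (Icc x1 x2) := hk1C.div haC ha0
  have hgP : ∀ x ∈ Icc x1 x2, 0 < k1 x / a x := fun x hx => div_pos (hk1P x hx) (haP x hx)
  have hIa : 0 < ∫ x in Icc x1 x2, k1 x / a x := hgC.setIntegral_Icc_pos hx hgP
  have hIb : 0 < ∫ x in Icc x1 x2, k1 x * kbar1 x / a x :=
    ((hk1C.mul hkbar1C).div haC ha0).setIntegral_Icc_pos hx fun x hx =>
      div_pos (mul_pos (hk1P x hx) (hkbar1P x hx)) (haP x hx)
  have hZ : ∫ x in Icc x1 x2, z x = c * ∫ x in Icc x1 x2, k1 x / a x := by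
    rw [integral_congr_ae hz, integral_const_mul]
  have hC : ∫ y in Icc x1 x2, kbar1 y * z y = c * ∫ x in Icc x1 x2, k1 x * kbar1 x / a x :=
    setIntegral_mul_eq_of_ae_eq_scaled_profile hz _ _ fun x _ => by ring
  have haz : ∫ x in Icc x1 x2, a x * z x = c * ∫ x in Icc x1 x2, k1 x :=
    setIntegral_mul_eq_of_ae_eq_scaled_profile hz _ _ fun x hx => by field_simp [ha0 x hx]
  have hD : 0 < 1 + β * (c * ∫ x in Icc x1 x2, k1 x / a x) := by positivity
  refine ⟨(hgC.integrableOn_Icc.const_mul c).congr hz.symm, ?_, hF ▸ by positivity, ?_,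
    by rwa [haz, hZ]⟩
  · filter_upwards [hz, ae_restrict_mem measurableSet_Icc] with x hzx hxm
    rw [hzx]
    exact mul_pos hc (hgP x hxm)
  · filter_upwards [hz, ae_restrict_mem measurableSet_Icc] with x hzx hxm
    simp only [mul_assoc, integral_const_mul, hC, hZ, hzx, hF]
    field_simp [ha0 x hxm]

end SeparableKernel

/-- for the separable kernel `k(x,y) = k1(x)·kbar1(y)` and `β·w < 1`,
the model has a unique positive stationary state, given by the explicit formulas. -/
theorem separable_kernel_unique_positive_stationary_state
    (x1 x2 : ℝ) (hx : x1 < x2)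
    (a k1 kbar1 : ℝ → ℝ)
    (haC : ContinuousOn a (Icc x1 x2)) (haP : ∀ x ∈ Icc x1 x2, 0 < a x)
    (hk1C : ContinuousOn k1 (Icc x1 x2)) (hk1P : ∀ x ∈ Icc x1 x2, 0 < k1 x)
    (hkbar1C : ContinuousOn kbar1 (Icc x1 x2))
    (hkbar1P : ∀ x ∈ Icc x1 x2, 0 < kbar1 x)
    (β K μ : ℝ) (hβ : 0 ≤ β) (hK : 0 < K) (hμ : 0 < μ)
    (w : ℝ)
    (hw : w = (μ * ∫ x in Icc x1 x2, k1 x / a x) / (K * ∫ x in Icc x1 x2, k1 x))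
    (hβw : β * w < 1)
    (zstar : ℝ → ℝ)
    (hzstar : zstar = fun x =>
      μ * k1 x / (K * (1 - β * w) * a x * ∫ s in Icc x1 x2, k1 s))
    (Fstar : ℝ)
    (hFstar : Fstar = (1 / (1 - β * w)) * ∫ x in Icc x1 x2, k1 x * kbar1 x / a x) :
    IsPositiveStationaryState x1 x2 β K μ (fun x y => k1 x * kbar1 y) a zstar Fstar ∧
    (∫ x in Icc x1 x2, zstar x) = w / (1 - β * w) ∧
    (∀ z F, IsPositiveStationaryState x1 x2 β K μ (fun x y => k1 x * kbar1 y) a z F →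
      F = Fstar ∧ z =ᵐ[volume.restrict (Icc x1 x2)] zstar) := by
  have hI1 : 0 < ∫ x in Icc x1 x2, k1 x := hk1C.setIntegral_Icc_pos hx hk1P
  have hE : 0 < 1 - β * w := by linarith
  set cstar := μ / (K * (1 - β * w) * ∫ x in Icc x1 x2, k1 x)
  have hcstar : 0 < cstar := by positivity
  have hmass : cstar * ∫ x in Icc x1 x2, k1 x / a x = w / (1 - β * w) := scale_mul_eq_div_one_sub hw
  have hzstar' : zstar = fun x => cstar * (k1 x / a x) := by
    rw [hzstar]; ext x; simp only [cstar, div_eq_mul_inv, mul_inv]; ring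
  have hFstar' : Fstar = (1 + β * (cstar * ∫ x in Icc x1 x2, k1 x / a x)) *
      ∫ x in Icc x1 x2, k1 x * kbar1 x / a x := by
    rw [hFstar, hmass]; field_simp; ring
  have hcons : ∀ c, μ / K = c * (∫ x in Icc x1 x2, k1 x) /
      (1 + β * (c * ∫ x in Icc x1 x2, k1 x / a x)) ↔ c = cstar := fun _ =>
    consistency_iff_eq_scale hK.ne' hμ.ne' hI1.ne' hw hβw.ne
  refine ⟨isPositiveStationaryState_of_scaled_profile_of_separable hx haC haP hk1C hk1P
      hkbar1C hkbar1P hβ hcstar (.of_eq hzstar') hFstar' ((hcons cstar).mpr rfl),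
    by rw [hzstar', integral_const_mul, hmass], fun z F hzF => ?_⟩
  obtain ⟨c, hz, hF, hcons'⟩ :=
    hzF.exists_scaled_profile_of_separable hx haP hkbar1C hkbar1P hβ
  obtain rfl : c = cstar := (hcons c).mp hcons'
  exact ⟨hF.trans hFstar'.symm, hz.trans (.of_eq hzstar'.symm)⟩
end

section
/- Let n ≥ 1, let α ∈ ℝⁿ with α_i > 0 for all i, and let κ be an n×n real matrix with κ_{j,i} > 0 for all i, j. Then there exists a vector Z ∈ ℝⁿ with Z_j > 0 for all j such that Z_j · (Σ_{i=1}^{n} α_i Z_i) = Σ_{i=1}^{n} κ_{j,i} Z_i for every j = 1, …, n. -/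
/-!
A positive solution is a positive eigenvector rescaled: if `κ x = r x` with `r > 0` and `x > 0`,
then `Z = (r / ⟪α, x⟫) x` solves the system. The positive eigenvector comes from the
Collatz–Wielandt argument: maximise `r` over pairs `(r, x)`, `x` in the standard simplex,
with `r x ≤ κ x`. At a maximiser, if `κ x ≠ r x`, then applying the positive matrix `κ` to the
gap makes `y = κ x` satisfy `r y < κ y` strictly in every coordinate, so a larger `r` is
admissible.
-/

open Finset Filter Topology

theorem exists_gt_forall_mul_lt {ι : Type*} [Finite ι] {r : ℝ} {y z : ι → ℝ}
    (h : ∀ i, r * y i < z i) : ∃ t, r < t ∧ ∀ i, t * y i < z i := by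
  have hnhds : ∀ᶠ t in 𝓝 r, ∀ i, t * y i < z i :=
    eventually_all.2 fun i => (continuous_mul_const (y i)).continuousAt.eventually_lt
      continuousAt_const (h i)
  obtain ⟨t, ht, hrt⟩ :=
    ((hnhds.filter_mono nhdsWithin_le_nhds).and (self_mem_nhdsWithin (s := Set.Ioi r))).exists
  exact ⟨t, hrt, ht⟩

namespace Matrix

variable {ι : Type*} [Fintype ι] {A : Matrix ι ι ℝ}

theorem mulVec_pos_of_pos (hA : ∀ i j, 0 < A i j) {x : ι → ℝ} (hx : 0 ≤ x) (hx₀ : x ≠ 0)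
    (i : ι) : 0 < (A *ᵥ x) i := by
  obtain ⟨j, hj⟩ := Function.ne_iff.1 hx₀
  exact sum_pos' (fun k _ => mul_nonneg (hA i k).le (hx k))
    ⟨j, mem_univ j, mul_pos (hA i j) ((hx j).lt_of_ne' hj)⟩

theorem le_sum_of_smul_le_mulVec (hA : ∀ i j, 0 ≤ A i j) {r : ℝ} {x : ι → ℝ}
    (hx : x ∈ stdSimplex ℝ ι) (h : r • x ≤ A *ᵥ x) : r ≤ ∑ i, ∑ j, A i j :=
  calc r = ∑ i, r * x i := by rw [← mul_sum, hx.2, mul_one]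
    _ ≤ ∑ i, ∑ j, A i j * x j := sum_le_sum fun i _ => h i
    _ ≤ ∑ i, ∑ j, A i j := sum_le_sum fun i _ => sum_le_sum fun j _ =>
      mul_le_of_le_one_right (hA i j) (mem_Icc_of_mem_stdSimplex hx j).2

/-- The Perron root of a positive matrix is the largest `r` occurring in this set. -/
def collatzWielandtSet (A : Matrix ι ι ℝ) : Set (ℝ × (ι → ℝ)) :=
  {p | p.2 ∈ stdSimplex ℝ ι ∧ 0 ≤ p.1 ∧ p.1 • p.2 ≤ A *ᵥ p.2}

theorem isCompact_collatzWielandtSet (hA : ∀ i j, 0 ≤ A i j) :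
    IsCompact (collatzWielandtSet A) := by
  refine (isCompact_Icc.prod (isCompact_stdSimplex ℝ ι)).of_isClosed_subset ?_
    (fun p ⟨hx, hr, h⟩ => ⟨⟨hr, le_sum_of_smul_le_mulVec hA hx h⟩, hx⟩)
  exact (isClosed_stdSimplex ℝ ι).preimage continuous_snd |>.inter <|
    (isClosed_le continuous_const continuous_fst).inter <|
    isClosed_le (continuous_fst.smul continuous_snd)
      (continuous_const.matrix_mulVec continuous_snd)

theorem normalize_mem_collatzWielandtSet {r : ℝ} {y : ι → ℝ} (hr : 0 ≤ r) (hy : 0 ≤ y)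
    (hs : 0 < ∑ i, y i) (h : r • y ≤ A *ᵥ y) :
    (r, (∑ i, y i)⁻¹ • y) ∈ collatzWielandtSet A := by
  refine ⟨⟨fun i => mul_nonneg (inv_nonneg.2 hs.le) (hy i), ?_⟩, hr, ?_⟩
  · simp only [Pi.smul_apply, smul_eq_mul, ← mul_sum, inv_mul_cancel₀ hs.ne']
  · rw [mulVec_smul, smul_comm]
    exact smul_le_smul_of_nonneg_left h (inv_nonneg.2 hs.le)

theorem exists_mem_collatzWielandtSet_fst_gt (hA : ∀ i j, 0 < A i j) {r : ℝ} {x : ι → ℝ}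
    (hrx : (r, x) ∈ collatzWielandtSet A) (hne : A *ᵥ x ≠ r • x) :
    ∃ p ∈ collatzWielandtSet A, r < p.1 := by
  obtain ⟨hx, hr, hle⟩ := hrx
  have hx₀ : x ≠ 0 := by rintro rfl; simpa using hx.2
  obtain ⟨j, -⟩ := Function.ne_iff.1 hx₀
  set y := A *ᵥ x
  have hy : ∀ i, 0 < y i := mulVec_pos_of_pos hA hx.1 hx₀
  have hgap : ∀ i, r * y i < (A *ᵥ y) i := by
    intro i
    have := mulVec_pos_of_pos hA (sub_nonneg.2 hle) (sub_ne_zero.2 hne) i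
    rwa [mulVec_sub, mulVec_smul, Pi.sub_apply, sub_pos] at this
  obtain ⟨t, hrt, ht⟩ := exists_gt_forall_mul_lt hgap
  exact ⟨_, normalize_mem_collatzWielandtSet (hr.trans hrt.le) (fun i => (hy i).le)
    (sum_pos (fun i _ => hy i) ⟨j, mem_univ j⟩) (fun i => (ht i).le), hrt⟩

theorem exists_pos_eigenvector_of_pos [Nonempty ι] (hA : ∀ i j, 0 < A i j) :
    ∃ r : ℝ, 0 < r ∧ ∃ x : ι → ℝ, (∀ i, 0 < x i) ∧ A *ᵥ x = r • x := by
  classical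
  obtain ⟨i₀⟩ := ‹Nonempty ι›
  have hAx : ∀ x ∈ stdSimplex ℝ ι, ∀ i, 0 < (A *ᵥ x) i := fun x hx =>
    mulVec_pos_of_pos hA hx.1 (by rintro rfl; simpa using hx.2)
  have hsingle : (0, Pi.single i₀ 1) ∈ collatzWielandtSet A := by
    have hx := single_mem_stdSimplex ℝ i₀
    exact ⟨hx, le_rfl, by rw [zero_smul]; exact fun i => (hAx _ hx i).le⟩
  obtain ⟨⟨r, x⟩, hrx, hmax⟩ :=
    (isCompact_collatzWielandtSet fun i j => (hA i j).le).exists_isMaxOn ⟨_, hsingle⟩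
      continuous_fst.continuousOn
  have heig : A *ᵥ x = r • x := by
    by_contra hne
    obtain ⟨p, hp, hrp⟩ := exists_mem_collatzWielandtSet_fst_gt hA hrx hne
    exact (hmax hp).not_gt hrp
  obtain ⟨hx : x ∈ stdSimplex ℝ ι, hr : 0 ≤ r, -⟩ := hrx
  have hrx_pos : ∀ i, 0 < r * x i := fun i => by simpa [heig] using hAx x hx i
  have hr₀ : 0 < r := hr.lt_of_ne fun h => (hrx_pos i₀).ne (by rw [← h, zero_mul])
  exact ⟨r, hr₀, x, fun i => pos_of_mul_pos_right (hrx_pos i) hr, heig⟩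

end Matrix

open Matrix

/-- For `n ≥ 1`, strictly positive `α ∈ ℝⁿ` and a strictly positive
`n × n` matrix `κ`, the nonlinear system `Z_j · (Σ_i α_i Z_i) = Σ_i κ_{j,i} Z_i`
has a strictly positive solution `Z`. -/
theorem finite_rank_scalar_system_has_positive_solution
    (n : ℕ) (hn : 1 ≤ n)
    (α : Fin n → ℝ) (hα : ∀ i, 0 < α i)
    (κ : Fin n → Fin n → ℝ) (hκ : ∀ j i, 0 < κ j i) :
    ∃ Z : Fin n → ℝ, (∀ j, 0 < Z j) ∧
      ∀ j, Z j * (∑ i, α i * Z i) = ∑ i, κ j i * Z i := by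
  have : Nonempty (Fin n) := ⟨⟨0, hn⟩⟩
  obtain ⟨r, hr, x, hx, heig⟩ := exists_pos_eigenvector_of_pos (A := of κ) hκ
  have hαx : 0 < α ⬝ᵥ x := sum_pos (fun i _ => mul_pos (hα i) (hx i)) univ_nonempty
  refine ⟨(r / (α ⬝ᵥ x)) • x, fun j => mul_pos (div_pos hr hαx) (hx j), fun j => ?_⟩
  change _ * α ⬝ᵥ _ = (of κ *ᵥ _) j
  rw [dotProduct_smul, mulVec_smul, heig]
  simp only [Pi.smul_apply, smul_eq_mul]
  field_simp
end

section
/- Let x1 < x2, let k : [x1,x2]² → ℝ be continuous with k(x,y) > 0 for all (x,y), and let A, K, μ > 0. Then there exists exactly one pair (z*, F*) with z* ∈ L¹(x1,x2) strictly positive a.e. and F* > 0 such that F*·A·z*(x) = ∫_{x1}^{x2} k(x,y) z*(y) dy for a.e. x ∈ [x1,x2] and ∫_{x1}^{x2} z*(x) dx = μ/(K·A). -/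
/-!
If `m ≤ k ≤ M` on `I × I` with `0 < m`, the integral operator `T` satisfies the Harnack-type
inequality `m (∫ h) T g ≤ M (∫ g) T h` for `g, h ≥ 0`. Applied to `h = f - a g` and `h = b g - f`
it shows that `T` contracts ratio bounds in Birkhoff's sense: from `a g ≤ f ≤ b g` one gets
`a' T g ≤ T f ≤ b' T g` with `b' / a' - 1 ≤ (1 - m / M) (b / a - 1)`.

Existence: the iterates of the normalised map `f ↦ T f / ∫ T f`, started at a constant, satisfy
`|z (n + 1) - z n| ≤ C (1 - m / M) ^ n`, so they converge pointwise; the limit `z` is positive,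
has integral one and satisfies `T z = λ z`, where `λ` is the limit of the normalising constants.
The stationary state is `z* = μ / (K A) • z` with `F* = λ / A`.

Uniqueness: a stationary state agrees a.e. with the everywhere-defined eigenfunction
`(F* A)⁻¹ T z*`. Two eigenfunctions with the same integral are fixed, up to positive factors, by
`T`, so the contraction makes their ratio bounds collapse to `1`; they coincide, and then so do
their eigenvalues.
-/

open MeasureTheory Set Filter Topology

theorem ratio_bounds_of_mem_Icc {L U u v : ℝ} (hL : 0 < L) (hu : u ∈ Icc L U) (hv : v ∈ Icc L U) :
    L / U * v ≤ u ∧ u ≤ U / L * v := by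
  have hU : 0 < U := hL.trans_le (hv.1.trans hv.2)
  constructor
  · calc L / U * v ≤ L / U * U := by gcongr; exact hv.2
      _ = L := div_mul_cancel₀ _ hU.ne'
      _ ≤ u := hu.1
  · calc u ≤ U / L * L := (div_mul_cancel₀ _ hL.ne').symm ▸ hu.2
      _ ≤ U / L * v := by gcongr; exact hv.1

theorem eq_of_abs_sub_le_pow {u v θ C : ℝ} (hθ0 : 0 ≤ θ) (hθ1 : θ < 1)
    (h : ∀ n : ℕ, |u - v| ≤ θ ^ n * C) : u = v := by
  have := ge_of_tendsto' ((tendsto_pow_atTop_nhds_zero_of_lt_one hθ0 hθ1).mul_const C) h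
  rw [zero_mul, abs_nonpos_iff, sub_eq_zero] at this
  exact this

section

variable {α : Type*} [MeasurableSpace α] {μ : Measure α} {s : Set α} {k : α → α → ℝ} {m M : ℝ}

theorem abs_sub_le_of_ratio_bounds (hs : ∀ᵐ y ∂μ, y ∈ s) {f g : α → ℝ} (hf : Integrable f μ)
    (hg : Integrable g μ) (hfg_int : ∫ y, f y ∂μ = ∫ y, g y ∂μ) (hgint : 0 < ∫ y, g y ∂μ)
    (hg0 : ∀ x ∈ s, 0 ≤ g x) {a b : ℝ} (ha : 0 < a)
    (hfg : ∀ x ∈ s, a * g x ≤ f x ∧ f x ≤ b * g x) {x : α} (hx : x ∈ s) :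
    |f x - g x| ≤ (b / a - 1) * g x := by
  have ha1 : a ≤ 1 := by
    have := integral_mono_ae (hg.const_mul a) hf (hs.mono fun y hy => (hfg y hy).1)
    rw [integral_const_mul, hfg_int] at this
    nlinarith
  have hb1 : 1 ≤ b := by
    have := integral_mono_ae hf (hg.const_mul b) (hs.mono fun y hy => (hfg y hy).2)
    rw [integral_const_mul, hfg_int] at this
    nlinarith
  have hba : b / a * a = b := div_mul_cancel₀ b ha.ne'
  have hgx := hg0 x hx
  obtain ⟨hlo, hhi⟩ := hfg x hx
  rw [abs_sub_le_iff]
  constructor <;> nlinarith [mul_nonneg (sub_nonneg.2 ha1) hgx, mul_nonneg (sub_nonneg.2 hb1) hgx,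
    mul_nonneg (mul_nonneg (sub_nonneg.2 ha1) (sub_nonneg.2 ha1)) hgx]

theorem integrable_and_tendsto_integral_of_abs_le [IsFiniteMeasure μ] (hs : ∀ᵐ y ∂μ, y ∈ s)
    {z : ℕ → α → ℝ} {w : α → ℝ} {U : ℝ} (hz : ∀ n, AEStronglyMeasurable (z n) μ)
    (hzU : ∀ n, ∀ x ∈ s, |z n x| ≤ U)
    (hlim : ∀ x ∈ s, Tendsto (fun n => z n x) atTop (𝓝 (w x))) :
    Integrable w μ ∧ Tendsto (fun n => ∫ y, z n y ∂μ) atTop (𝓝 (∫ y, w y ∂μ)) := by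
  refine ⟨(integrable_const U).mono' (aestronglyMeasurable_of_tendsto_ae atTop hz (hs.mono hlim))
      (hs.mono fun x hx => ?_), tendsto_integral_of_dominated_convergence (fun _ => U) hz
      (integrable_const U) (fun n => hs.mono (hzU n)) (hs.mono hlim)⟩
  exact le_of_tendsto' ((hlim x hx).norm) fun n => hzU n x hx

structure IsPinchedKernel (μ : Measure α) (s : Set α) (k : α → α → ℝ) (m M : ℝ) : Prop where
  ae_mem : ∀ᵐ y ∂μ, y ∈ s
  pos : 0 < m
  le_apply : ∀ x ∈ s, ∀ y ∈ s, m ≤ k x y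
  apply_le : ∀ x ∈ s, ∀ y ∈ s, k x y ≤ M
  aestronglyMeasurable_uncurry : AEStronglyMeasurable (Function.uncurry k) (μ.prod μ)
  aestronglyMeasurable_apply : ∀ x ∈ s, AEStronglyMeasurable (k x) μ

noncomputable def kernelOp (μ : Measure α) (k : α → α → ℝ) (f : α → ℝ) (x : α) : ℝ :=
  ∫ y, k x y * f y ∂μ

noncomputable def normalizedKernelOp (μ : Measure α) (k : α → α → ℝ) (f : α → ℝ) (x : α) : ℝ :=
  kernelOp μ k f x / ∫ y, kernelOp μ k f y ∂μ

noncomputable def powerIterate (μ : Measure α) (k : α → α → ℝ) (n : ℕ) : α → ℝ :=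
  (normalizedKernelOp μ k)^[n] fun _ => (μ.real univ)⁻¹

theorem powerIterate_succ {n : ℕ} :
    powerIterate μ k (n + 1) = normalizedKernelOp μ k (powerIterate μ k n) :=
  Function.iterate_succ_apply' _ _ _

theorem kernelOp_congr_ae {f g : α → ℝ} (h : f =ᵐ[μ] g) : kernelOp μ k f = kernelOp μ k g :=
  funext fun _ => integral_congr_ae (h.mono fun _ hy => by simp only [hy])

theorem kernelOp_const_mul (c : ℝ) (f : α → ℝ) (x : α) :
    kernelOp μ k (fun y => c * f y) x = c * kernelOp μ k f x := by
  simp only [kernelOp, ← integral_const_mul, mul_left_comm c]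

theorem kernelOp_neg (f : α → ℝ) (x : α) :
    kernelOp μ k (fun y => -f y) x = -kernelOp μ k f x := by
  simp only [kernelOp, mul_neg, integral_neg]

namespace IsPinchedKernel

variable (hk : IsPinchedKernel μ s k m M)
include hk

theorem le_of_neZero [NeZero μ] : m ≤ M := by
  obtain ⟨x, hx⟩ := hk.ae_mem.exists
  exact (hk.le_apply x hx x hx).trans (hk.apply_le x hx x hx)

theorem div_mem_Ioc [NeZero μ] : m / M ∈ Ioc 0 1 :=
  ⟨div_pos hk.pos (hk.pos.trans_le hk.le_of_neZero),
    div_le_one_of_le₀ hk.le_of_neZero (hk.pos.trans_le hk.le_of_neZero).le⟩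

theorem integrable_mul {f : α → ℝ} (hf : Integrable f μ) {x : α} (hx : x ∈ s) :
    Integrable (fun y => k x y * f y) μ := by
  refine (hf.norm.const_mul M).mono' ((hk.aestronglyMeasurable_apply x hx).mul hf.1) ?_
  filter_upwards [hk.ae_mem] with y hy
  rw [norm_mul, Real.norm_of_nonneg (hk.pos.le.trans (hk.le_apply x hx y hy))]
  exact mul_le_mul_of_nonneg_right (hk.apply_le x hx y hy) (norm_nonneg _)

theorem kernelOp_sub {f g : α → ℝ} (hf : Integrable f μ) (hg : Integrable g μ) {x : α}
    (hx : x ∈ s) : kernelOp μ k (fun y => f y - g y) x = kernelOp μ k f x - kernelOp μ k g x := by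
  simp only [kernelOp, mul_sub]
  exact integral_sub (hk.integrable_mul hf hx) (hk.integrable_mul hg hx)

theorem mul_integral_le_kernelOp {h : α → ℝ} (hh : Integrable h μ) (hh0 : 0 ≤ᵐ[μ] h) {x : α}
    (hx : x ∈ s) : m * ∫ y, h y ∂μ ≤ kernelOp μ k h x := by
  rw [← integral_const_mul]
  refine integral_mono_ae (hh.const_mul m) (hk.integrable_mul hh hx) ?_
  filter_upwards [hk.ae_mem, hh0] with y hy hy0
  exact mul_le_mul_of_nonneg_right (hk.le_apply x hx y hy) hy0

theorem kernelOp_le_mul_integral {h : α → ℝ} (hh : Integrable h μ) (hh0 : 0 ≤ᵐ[μ] h) {x : α}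
    (hx : x ∈ s) : kernelOp μ k h x ≤ M * ∫ y, h y ∂μ := by
  rw [← integral_const_mul]
  refine integral_mono_ae (hk.integrable_mul hh hx) (hh.const_mul M) ?_
  filter_upwards [hk.ae_mem, hh0] with y hy hy0
  exact mul_le_mul_of_nonneg_right (hk.apply_le x hx y hy) hy0

theorem harnack {g h : α → ℝ} (hg : Integrable g μ) (hg0 : 0 ≤ᵐ[μ] g) (hh : Integrable h μ)
    (hh0 : 0 ≤ᵐ[μ] h) {x : α} (hx : x ∈ s) :
    m * (∫ y, h y ∂μ) * kernelOp μ k g x ≤ M * (∫ y, g y ∂μ) * kernelOp μ k h x := by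
  have hM : 0 ≤ M := hk.pos.le.trans ((hk.le_apply x hx x hx).trans (hk.apply_le x hx x hx))
  calc m * (∫ y, h y ∂μ) * kernelOp μ k g x ≤ m * (∫ y, h y ∂μ) * (M * ∫ y, g y ∂μ) :=
        mul_le_mul_of_nonneg_left (hk.kernelOp_le_mul_integral hg hg0 hx)
          (mul_nonneg hk.pos.le (integral_nonneg_of_ae hh0))
    _ = M * (∫ y, g y ∂μ) * (m * ∫ y, h y ∂μ) := by ring
    _ ≤ M * (∫ y, g y ∂μ) * kernelOp μ k h x :=
        mul_le_mul_of_nonneg_left (hk.mul_integral_le_kernelOp hh hh0 hx)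
          (mul_nonneg hM (integral_nonneg_of_ae hg0))

theorem integrable_kernelOp [IsFiniteMeasure μ] {f : α → ℝ} (hf : Integrable f μ) :
    Integrable (kernelOp μ k f) μ := by
  have hmeas : AEStronglyMeasurable (kernelOp μ k f) μ :=
    (hk.aestronglyMeasurable_uncurry.mul hf.1.comp_snd).integral_prod_right'
  refine (integrable_const (M * ∫ y, ‖f y‖ ∂μ)).mono' hmeas ?_
  filter_upwards [hk.ae_mem] with x hx
  calc ‖kernelOp μ k f x‖ ≤ ∫ y, ‖k x y * f y‖ ∂μ := norm_integral_le_integral_norm _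
    _ = kernelOp μ k (fun y => ‖f y‖) x := by
      refine integral_congr_ae ?_
      filter_upwards [hk.ae_mem] with y hy
      rw [norm_mul, Real.norm_of_nonneg (hk.pos.le.trans (hk.le_apply x hx y hy))]
    _ ≤ M * ∫ y, ‖f y‖ ∂μ :=
      hk.kernelOp_le_mul_integral hf.norm (ae_of_all _ fun _ => norm_nonneg _) hx

theorem mul_div_mul_sub_le_kernelOp_sub {f g : α → ℝ} (hf : Integrable f μ)
    (hg : Integrable g μ) (hg0 : 0 ≤ᵐ[μ] g) (hgint : 0 < ∫ y, g y ∂μ) {a : ℝ}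
    (hfg : ∀ᵐ y ∂μ, a * g y ≤ f y) {x : α} (hx : x ∈ s) :
    m / M * ((∫ y, f y ∂μ) / (∫ y, g y ∂μ) - a) * kernelOp μ k g x ≤
      kernelOp μ k f x - a * kernelOp μ k g x := by
  have hM : 0 < M := hk.pos.trans_le ((hk.le_apply x hx x hx).trans (hk.apply_le x hx x hx))
  have hag : Integrable (fun y => a * g y) μ := hg.const_mul a
  have key := hk.harnack (h := fun y => f y - a * g y) hg hg0 (hf.sub hag)
    (hfg.mono fun y hy => sub_nonneg.2 hy) hx
  rw [integral_sub hf hag, integral_const_mul, hk.kernelOp_sub hf hag hx,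
    kernelOp_const_mul] at key
  calc m / M * ((∫ y, f y ∂μ) / (∫ y, g y ∂μ) - a) * kernelOp μ k g x
      = m * ((∫ y, f y ∂μ) - a * ∫ y, g y ∂μ) * kernelOp μ k g x / (M * ∫ y, g y ∂μ) := by
        field_simp
    _ ≤ kernelOp μ k f x - a * kernelOp μ k g x := by
        rw [div_le_iff₀ (by positivity)]
        linarith

theorem exists_ratio_bounds_kernelOp {f g : α → ℝ} (hf : Integrable f μ) (hg : Integrable g μ)
    (hg0 : 0 ≤ᵐ[μ] g) (hgint : 0 < ∫ y, g y ∂μ) {a b : ℝ} (ha : 0 < a)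
    (hfg : ∀ᵐ y ∂μ, a * g y ≤ f y ∧ f y ≤ b * g y) :
    ∃ a' b', 0 < a' ∧
      (∀ x ∈ s, a' * kernelOp μ k g x ≤ kernelOp μ k f x ∧
        kernelOp μ k f x ≤ b' * kernelOp μ k g x) ∧
      b' / a' - 1 ≤ (1 - m / M) * (b / a - 1) := by
  have : NeZero μ := ⟨fun h => by simp [h] at hgint⟩
  set q := (∫ y, f y ∂μ) / ∫ y, g y ∂μ
  have haq : a ≤ q := by
    rw [le_div_iff₀ hgint, ← integral_const_mul]
    exact integral_mono_ae (hg.const_mul a) hf (hfg.mono fun y hy => hy.1)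
  have hqb : q ≤ b := by
    rw [div_le_iff₀ hgint, ← integral_const_mul]
    exact integral_mono_ae hf (hg.const_mul b) (hfg.mono fun y hy => hy.2)
  -- `q` lies in `[a, b]`, and by the Harnack inequality both bounds move the fraction `m / M` of
  -- their distance towards `q`
  set r := m / M
  obtain ⟨hr0, hr1⟩ := hk.div_mem_Ioc
  refine ⟨a + r * (q - a), b - r * (b - q), by nlinarith, fun x hx => ⟨?_, ?_⟩, ?_⟩
  · have := hk.mul_div_mul_sub_le_kernelOp_sub hf hg hg0 hgint (hfg.mono fun y hy => hy.1) hx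
    linarith
  · have := hk.mul_div_mul_sub_le_kernelOp_sub (f := fun y => -f y) (a := -b) hf.neg hg hg0 hgint
      (hfg.mono fun y hy => by linarith [hy.2]) hx
    rw [integral_neg, kernelOp_neg, neg_div] at this
    linarith
  · have ha' : 0 < a + r * (q - a) := by nlinarith
    calc (b - r * (b - q)) / (a + r * (q - a)) - 1 = (1 - r) * (b - a) / (a + r * (q - a)) := by
          field_simp
          ring
      _ ≤ (1 - r) * (b - a) / a :=
          div_le_div_of_nonneg_left (by nlinarith) ha (by nlinarith)
      _ = (1 - r) * (b / a - 1) := by field_simp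

theorem exists_ratio_bounds_of_succ {F G : ℕ → α → ℝ} {c c' : ℕ → ℝ}
    (hF : ∀ n, Integrable (F n) μ) (hG : ∀ n, Integrable (G n) μ)
    (hG0 : ∀ n, ∀ x ∈ s, 0 ≤ G n x) (hGint : ∀ n, 0 < ∫ y, G n y ∂μ)
    (hc : ∀ n, 0 < c n) (hc' : ∀ n, 0 < c' n)
    (hFsucc : ∀ n, ∀ x ∈ s, F (n + 1) x = c n * kernelOp μ k (F n) x)
    (hGsucc : ∀ n, ∀ x ∈ s, G (n + 1) x = c' n * kernelOp μ k (G n) x)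
    {a b : ℝ} (ha : 0 < a) (h0 : ∀ x ∈ s, a * G 0 x ≤ F 0 x ∧ F 0 x ≤ b * G 0 x) (n : ℕ) :
    ∃ a' b', 0 < a' ∧ (∀ x ∈ s, a' * G n x ≤ F n x ∧ F n x ≤ b' * G n x) ∧
      b' / a' - 1 ≤ (1 - m / M) ^ n * (b / a - 1) := by
  have : NeZero μ := ⟨fun h => by simpa [h] using hGint 0⟩
  have hθ : 0 ≤ 1 - m / M := sub_nonneg.2 hk.div_mem_Ioc.2
  induction n with
  | zero => exact ⟨a, b, ha, h0, by simp⟩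
  | succ n ih =>
    obtain ⟨a', b', ha', hn, hab'⟩ := ih
    obtain ⟨a'', b'', ha'', hT, hab''⟩ := hk.exists_ratio_bounds_kernelOp (hF n) (hG n)
      (hk.ae_mem.mono (hG0 n)) (hGint n) ha' (hk.ae_mem.mono hn)
    have hd : 0 < c n / c' n := div_pos (hc n) (hc' n)
    refine ⟨a'' * (c n / c' n), b'' * (c n / c' n), mul_pos ha'' hd, fun x hx => ?_, ?_⟩
    · have e : ∀ t u, t * (c n / c' n) * (c' n * u) = c n * (t * u) := fun t u => by
        field_simp [(hc' n).ne']
      rw [hFsucc n x hx, hGsucc n x hx, e, e]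
      exact ⟨mul_le_mul_of_nonneg_left (hT x hx).1 (hc n).le,
        mul_le_mul_of_nonneg_left (hT x hx).2 (hc n).le⟩
    · rw [mul_div_mul_right _ _ hd.ne', pow_succ', mul_assoc]
      exact hab''.trans (mul_le_mul_of_nonneg_left hab' hθ)

theorem abs_sub_le_of_succ {F G : ℕ → α → ℝ} {c c' : ℕ → ℝ}
    (hF : ∀ n, Integrable (F n) μ) (hG : ∀ n, Integrable (G n) μ)
    (hG0 : ∀ n, ∀ x ∈ s, 0 ≤ G n x) (hGint : ∀ n, 0 < ∫ y, G n y ∂μ)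
    (hFG : ∀ n, ∫ y, F n y ∂μ = ∫ y, G n y ∂μ)
    (hc : ∀ n, 0 < c n) (hc' : ∀ n, 0 < c' n)
    (hFsucc : ∀ n, ∀ x ∈ s, F (n + 1) x = c n * kernelOp μ k (F n) x)
    (hGsucc : ∀ n, ∀ x ∈ s, G (n + 1) x = c' n * kernelOp μ k (G n) x)
    {a b : ℝ} (ha : 0 < a) (h0 : ∀ x ∈ s, a * G 0 x ≤ F 0 x ∧ F 0 x ≤ b * G 0 x)
    (n : ℕ) {x : α} (hx : x ∈ s) :
    |F n x - G n x| ≤ (1 - m / M) ^ n * (b / a - 1) * G n x := by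
  obtain ⟨a', b', ha', hn, hab'⟩ :=
    hk.exists_ratio_bounds_of_succ hF hG hG0 hGint hc hc' hFsucc hGsucc ha h0 n
  exact (abs_sub_le_of_ratio_bounds hk.ae_mem (hF n) (hG n) (hFG n) (hGint n) (hG0 n) ha' hn
    hx).trans (mul_le_mul_of_nonneg_right hab' (hG0 n x hx))

theorem eq_of_eigen {f g : α → ℝ} {lam lam' c : ℝ} (hc : 0 < c) (hlam : 0 < lam)
    (hlam' : 0 < lam') (hf : Integrable f μ) (hg : Integrable g μ) (hf0 : ∀ x ∈ s, 0 ≤ f x)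
    (hg0 : ∀ x ∈ s, 0 ≤ g x) (hfc : ∫ y, f y ∂μ = c) (hgc : ∫ y, g y ∂μ = c)
    (hTf : ∀ x ∈ s, kernelOp μ k f x = lam * f x) (hTg : ∀ x ∈ s, kernelOp μ k g x = lam' * g x) :
    lam = lam' ∧ ∀ x ∈ s, f x = g x := by
  have : NeZero μ := ⟨fun h => by simp [h] at hgc; linarith⟩
  have hf_bounds : ∀ x ∈ s, m * c ≤ lam * f x ∧ lam * f x ≤ M * c := fun x hx => by
    rw [← hTf x hx, ← hfc]
    exact ⟨hk.mul_integral_le_kernelOp hf (hk.ae_mem.mono hf0) hx,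
      hk.kernelOp_le_mul_integral hf (hk.ae_mem.mono hf0) hx⟩
  have hg_bounds : ∀ x ∈ s, m * c ≤ lam' * g x ∧ lam' * g x ≤ M * c := fun x hx => by
    rw [← hTg x hx, ← hgc]
    exact ⟨hk.mul_integral_le_kernelOp hg (hk.ae_mem.mono hg0) hx,
      hk.kernelOp_le_mul_integral hg (hk.ae_mem.mono hg0) hx⟩
  have hm := hk.pos
  have hM : 0 < M := hm.trans_le hk.le_of_neZero
  have h0 : ∀ y ∈ s, m / M * (lam' / lam) * g y ≤ f y ∧ f y ≤ M / m * (lam' / lam) * g y :=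
    fun y hy => by
      obtain ⟨hf1, hf2⟩ := hf_bounds y hy
      obtain ⟨hg1, hg2⟩ := hg_bounds y hy
      constructor
      · rw [show m / M * (lam' / lam) * g y = m * (lam' * g y) / (M * lam) by field_simp,
          div_le_iff₀ (by positivity)]
        nlinarith
      · rw [show M / m * (lam' / lam) * g y = M * (lam' * g y) / (m * lam) by field_simp,
          le_div_iff₀ (by positivity)]
        nlinarith
  have hfg : ∀ x ∈ s, f x = g x := fun x hx =>
    eq_of_abs_sub_le_pow (sub_nonneg.2 hk.div_mem_Ioc.2) (sub_lt_self 1 hk.div_mem_Ioc.1)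
      fun n => by
        rw [← mul_assoc]
        exact hk.abs_sub_le_of_succ (F := fun _ => f) (G := fun _ => g) (c := fun _ => lam⁻¹)
          (c' := fun _ => lam'⁻¹) (fun _ => hf) (fun _ => hg) (fun _ => hg0) (fun _ => hgc ▸ hc)
          (fun _ => hfc.trans hgc.symm) (fun _ => inv_pos.2 hlam) (fun _ => inv_pos.2 hlam')
          (fun _ y hy => by rw [hTf y hy, inv_mul_cancel_left₀ hlam.ne'])
          (fun _ y hy => by rw [hTg y hy, inv_mul_cancel_left₀ hlam'.ne'])
          (by positivity) h0 n hx
  obtain ⟨x, hx⟩ := hk.ae_mem.exists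
  have hfx : 0 < f x := pos_of_mul_pos_right ((mul_pos hm hc).trans_le (hf_bounds x hx).1) hlam.le
  refine ⟨mul_right_cancel₀ hfx.ne' ?_, hfg⟩
  rw [← hTf x hx, kernelOp_congr_ae (hk.ae_mem.mono hfg), hTg x hx, hfg x hx]

theorem exists_ae_eq_forall_eigen [IsFiniteMeasure μ] {f : α → ℝ} {lam : ℝ} (hlam : 0 < lam)
    (hf : Integrable f μ) (hf0 : 0 ≤ᵐ[μ] f) (hTf : ∀ᵐ x ∂μ, lam * f x = kernelOp μ k f x) :
    ∃ f', f =ᵐ[μ] f' ∧ Integrable f' μ ∧ (∀ x ∈ s, 0 ≤ f' x) ∧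
      ∀ x, kernelOp μ k f' x = lam * f' x := by
  have hff' : f =ᵐ[μ] fun x => lam⁻¹ * kernelOp μ k f x :=
    hTf.mono fun x hx => by simp only [← hx, inv_mul_cancel_left₀ hlam.ne']
  refine ⟨_, hff', (hk.integrable_kernelOp hf).const_mul _, fun x hx => ?_, fun x => ?_⟩
  · exact mul_nonneg (inv_nonneg.2 hlam.le) ((mul_nonneg hk.pos.le
      (integral_nonneg_of_ae hf0)).trans (hk.mul_integral_le_kernelOp hf hf0 hx))
  · rw [← kernelOp_congr_ae hff', mul_inv_cancel_left₀ hlam.ne']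

theorem eq_and_ae_eq_of_ae_eigen [IsFiniteMeasure μ] {f g : α → ℝ} {lam lam' c : ℝ} (hc : 0 < c)
    (hlam : 0 < lam) (hlam' : 0 < lam') (hf : Integrable f μ) (hg : Integrable g μ)
    (hf0 : 0 ≤ᵐ[μ] f) (hg0 : 0 ≤ᵐ[μ] g) (hfc : ∫ y, f y ∂μ = c) (hgc : ∫ y, g y ∂μ = c)
    (hTf : ∀ᵐ x ∂μ, lam * f x = kernelOp μ k f x)
    (hTg : ∀ᵐ x ∂μ, lam' * g x = kernelOp μ k g x) :
    lam = lam' ∧ f =ᵐ[μ] g := by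
  obtain ⟨f', hff', hf', hf'0, hTf'⟩ := hk.exists_ae_eq_forall_eigen hlam hf hf0 hTf
  obtain ⟨g', hgg', hg', hg'0, hTg'⟩ := hk.exists_ae_eq_forall_eigen hlam' hg hg0 hTg
  obtain ⟨hlam_eq, hfg'⟩ := hk.eq_of_eigen hc hlam hlam' hf' hg' hf'0 hg'0
    ((integral_congr_ae hff').symm.trans hfc) ((integral_congr_ae hgg').symm.trans hgc)
    (fun x _ => hTf' x) (fun x _ => hTg' x)
  have hfg'_ae : f' =ᵐ[μ] g' := hk.ae_mem.mono hfg'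
  exact ⟨hlam_eq, hff'.trans (hfg'_ae.trans hgg'.symm)⟩

theorem tendsto_kernelOp [IsFiniteMeasure μ] {F : ℕ → α → ℝ} {f : α → ℝ}
    (hF : ∀ n, AEStronglyMeasurable (F n) μ) {C : ℝ} (hC : ∀ n, ∀ y ∈ s, |F n y| ≤ C)
    (hlim : ∀ y ∈ s, Tendsto (fun n => F n y) atTop (𝓝 (f y))) {x : α} (hx : x ∈ s) :
    Tendsto (fun n => kernelOp μ k (F n) x) atTop (𝓝 (kernelOp μ k f x)) := by
  refine tendsto_integral_of_dominated_convergence (fun _ => M * C)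
    (fun n => (hk.aestronglyMeasurable_apply x hx).mul (hF n)) (integrable_const _)
    (fun n => hk.ae_mem.mono fun y hy => ?_) (hk.ae_mem.mono fun y hy => (hlim y hy).const_mul _)
  have hkxy := hk.pos.trans_le (hk.le_apply x hx y hy)
  rw [norm_mul, Real.norm_of_nonneg hkxy.le, Real.norm_eq_abs]
  exact mul_le_mul (hk.apply_le x hx y hy) (hC n y hy) (abs_nonneg _)
    (hkxy.le.trans (hk.apply_le x hx y hy))

theorem mul_measureReal_le_integral_kernelOp [IsFiniteMeasure μ] {f : α → ℝ} (hf : Integrable f μ)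
    (hf0 : 0 ≤ᵐ[μ] f) :
    m * μ.real univ * ∫ y, f y ∂μ ≤ ∫ x, kernelOp μ k f x ∂μ ∧
      ∫ x, kernelOp μ k f x ∂μ ≤ M * μ.real univ * ∫ y, f y ∂μ := by
  have hTf := hk.integrable_kernelOp hf
  constructor
  · have := integral_mono_ae (integrable_const _) hTf
      (hk.ae_mem.mono fun x hx => hk.mul_integral_le_kernelOp hf hf0 hx)
    rwa [integral_const, smul_eq_mul, mul_left_comm, ← mul_assoc] at this
  · have := integral_mono_ae hTf (integrable_const _)
      (hk.ae_mem.mono fun x hx => hk.kernelOp_le_mul_integral hf hf0 hx)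
    rwa [integral_const, smul_eq_mul, mul_left_comm, ← mul_assoc] at this

theorem integral_kernelOp_pos [IsFiniteMeasure μ] [NeZero μ] {f : α → ℝ} (hf : Integrable f μ)
    (hf0 : 0 ≤ᵐ[μ] f) (hfpos : 0 < ∫ y, f y ∂μ) : 0 < ∫ x, kernelOp μ k f x ∂μ :=
  (mul_pos (mul_pos hk.pos measureReal_univ_pos) hfpos).trans_le
    (hk.mul_measureReal_le_integral_kernelOp hf hf0).1

theorem mapsTo_normalizedKernelOp [IsFiniteMeasure μ] [NeZero μ] :
    MapsTo (normalizedKernelOp μ k)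
      {f | Integrable f μ ∧ ∫ y, f y ∂μ = 1 ∧
        ∀ x ∈ s, f x ∈ Icc (m / (M * μ.real univ)) (M / (m * μ.real univ))}
      {f | Integrable f μ ∧ ∫ y, f y ∂μ = 1 ∧
        ∀ x ∈ s, f x ∈ Icc (m / (M * μ.real univ)) (M / (m * μ.real univ))} := by
  rintro f ⟨hf, hf1, hfs⟩
  have hm := hk.pos
  have hM : 0 < M := hm.trans_le hk.le_of_neZero
  have hμ : 0 < μ.real univ := measureReal_univ_pos
  have hf0 : 0 ≤ᵐ[μ] f := hk.ae_mem.mono fun x hx => le_trans (by positivity) (hfs x hx).1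
  obtain ⟨hlo, hhi⟩ := hk.mul_measureReal_le_integral_kernelOp hf hf0
  rw [hf1, mul_one] at hlo hhi
  have hpos := hk.integral_kernelOp_pos hf hf0 (hf1 ▸ one_pos)
  refine ⟨(hk.integrable_kernelOp hf).div_const _, by
    simp only [normalizedKernelOp, integral_div, div_self hpos.ne'], fun x hx => ⟨?_, ?_⟩⟩
  · have hTx := hk.mul_integral_le_kernelOp hf hf0 hx
    rw [hf1, mul_one] at hTx
    exact div_le_div₀ (hm.le.trans hTx) hTx hpos hhi
  · have hTx := hk.kernelOp_le_mul_integral hf hf0 hx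
    rw [hf1, mul_one] at hTx
    exact div_le_div₀ hM.le hTx (by positivity) hlo

theorem exists_eigen_of_tendsto [IsFiniteMeasure μ] [NeZero μ] {z : ℕ → α → ℝ} {w : α → ℝ}
    {L U : ℝ} (hL : 0 < L) (hz : ∀ n, Integrable (z n) μ) (hz1 : ∀ n, ∫ y, z n y ∂μ = 1)
    (hzb : ∀ n, ∀ x ∈ s, z n x ∈ Icc L U) (hsucc : ∀ n, z (n + 1) = normalizedKernelOp μ k (z n))
    (hlim : ∀ x ∈ s, Tendsto (fun n => z n x) atTop (𝓝 (w x))) :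
    ∃ lam, 0 < lam ∧ Integrable w μ ∧ (∀ x ∈ s, 0 < w x) ∧
      (∀ x ∈ s, kernelOp μ k w x = lam * w x) ∧ ∫ y, w y ∂μ = 1 := by
  have hwpos : ∀ x ∈ s, 0 < w x := fun x hx =>
    hL.trans_le (ge_of_tendsto' (hlim x hx) fun n => (hzb n x hx).1)
  have hz_abs : ∀ n, ∀ x ∈ s, |z n x| ≤ U := fun n x hx => by
    rw [abs_of_pos (hL.trans_le (hzb n x hx).1)]
    exact (hzb n x hx).2
  obtain ⟨hw, hint⟩ := integrable_and_tendsto_integral_of_abs_le hk.ae_mem (fun n => (hz n).1)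
    hz_abs hlim
  have hw1 : ∫ y, w y ∂μ = 1 := tendsto_nhds_unique hint (by simp only [hz1, tendsto_const_nhds])
  have hT := fun x (hx : x ∈ s) => hk.tendsto_kernelOp (fun n => (hz n).1) hz_abs hlim hx
  have hlim_succ : ∀ x ∈ s, Tendsto (fun n => z (n + 1) x) atTop (𝓝 (w x)) := fun x hx =>
    (hlim x hx).comp (tendsto_add_atTop_nat 1)
  -- the normalising constants `ρ n = ∫ T (z n)` converge, as `ρ n = T (z n) x / z (n + 1) x`
  have hρ : ∀ n x, kernelOp μ k (z n) x = (∫ y, kernelOp μ k (z n) y ∂μ) * z (n + 1) x := by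
    intro n x
    rw [hsucc, normalizedKernelOp, mul_div_cancel₀]
    exact (hk.integral_kernelOp_pos (hz n) (hk.ae_mem.mono fun y hy => hL.le.trans (hzb n y hy).1)
      (hz1 n ▸ one_pos)).ne'
  obtain ⟨x₀, hx₀⟩ := hk.ae_mem.exists
  have hρ_lim : Tendsto (fun n => ∫ y, kernelOp μ k (z n) y ∂μ) atTop
      (𝓝 (kernelOp μ k w x₀ / w x₀)) := by
    refine ((hT x₀ hx₀).div (hlim_succ x₀ hx₀) (hwpos x₀ hx₀).ne').congr fun n => ?_
    change kernelOp μ k (z n) x₀ / z (n + 1) x₀ = _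
    rw [hρ n x₀, mul_div_cancel_right₀ _ (hL.trans_le (hzb (n + 1) x₀ hx₀).1).ne']
  refine ⟨kernelOp μ k w x₀ / w x₀, div_pos ?_ (hwpos x₀ hx₀), hw, hwpos, fun x hx => ?_, hw1⟩
  · exact (mul_pos hk.pos one_pos).trans_le
      (hw1 ▸ hk.mul_integral_le_kernelOp hw (hk.ae_mem.mono fun y hy => (hwpos y hy).le) hx₀)
  · refine tendsto_nhds_unique (hT x hx) ?_
    simp only [hρ _ x]
    exact hρ_lim.mul (hlim_succ x hx)

theorem powerIterate_mem [IsFiniteMeasure μ] [NeZero μ] (n : ℕ) :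
    Integrable (powerIterate μ k n) μ ∧ ∫ y, powerIterate μ k n y ∂μ = 1 ∧
      ∀ x ∈ s, powerIterate μ k n x ∈ Icc (m / (M * μ.real univ)) (M / (m * μ.real univ)) := by
  have hμ : 0 < μ.real univ := measureReal_univ_pos
  refine hk.mapsTo_normalizedKernelOp.iterate n ⟨integrable_const _, ?_, fun _ _ => ⟨?_, ?_⟩⟩
  · rw [integral_const, smul_eq_mul, mul_inv_cancel₀ hμ.ne']
  · rw [← div_div, inv_eq_one_div]
    exact div_le_div_of_nonneg_right hk.div_mem_Ioc.2 hμ.le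
  · rw [← div_div, inv_eq_one_div]
    exact div_le_div_of_nonneg_right ((one_le_div hk.pos).2 hk.le_of_neZero) hμ.le

theorem cauchySeq_powerIterate [IsFiniteMeasure μ] [NeZero μ] {x : α} (hx : x ∈ s) :
    CauchySeq fun n => powerIterate μ k n x := by
  set L := m / (M * μ.real univ)
  set U := M / (m * μ.real univ)
  have hL : 0 < L := div_pos hk.pos (mul_pos (hk.pos.trans_le hk.le_of_neZero) measureReal_univ_pos)
  have hz := hk.powerIterate_mem (k := k)
  have hLU : L ≤ U := ((hz 0).2.2 x hx).1.trans ((hz 0).2.2 x hx).2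
  have hU : 0 < U := hL.trans_le hLU
  have hC : 0 ≤ U / L / (L / U) - 1 := by
    rw [sub_nonneg, le_div_iff₀ (div_pos hL hU), one_mul]
    exact (div_le_one hU).2 hLU |>.trans ((one_le_div hL).2 hLU)
  have hρ : ∀ n, 0 < ∫ y, kernelOp μ k (powerIterate μ k n) y ∂μ := fun n =>
    hk.integral_kernelOp_pos (hz n).1 (hk.ae_mem.mono fun y hy => hL.le.trans ((hz n).2.2 y hy).1)
      ((hz n).2.1 ▸ one_pos)
  have hsucc : ∀ n, ∀ x ∈ s, powerIterate μ k (n + 1) x =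
      (∫ y, kernelOp μ k (powerIterate μ k n) y ∂μ)⁻¹ * kernelOp μ k (powerIterate μ k n) x :=
    fun n x _ => by rw [powerIterate_succ, normalizedKernelOp, div_eq_inv_mul]
  refine cauchySeq_of_le_geometric (1 - m / M) ((U / L / (L / U) - 1) * U)
    (sub_lt_self 1 hk.div_mem_Ioc.1) fun n => ?_
  rw [dist_comm, Real.dist_eq]
  calc |powerIterate μ k (n + 1) x - powerIterate μ k n x|
      ≤ (1 - m / M) ^ n * (U / L / (L / U) - 1) * powerIterate μ k n x :=
        hk.abs_sub_le_of_succ (F := fun n => powerIterate μ k (n + 1)) (fun n => (hz (n + 1)).1)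
          (fun n => (hz n).1) (fun n y hy => hL.le.trans ((hz n).2.2 y hy).1)
          (fun n => (hz n).2.1 ▸ one_pos) (fun n => (hz (n + 1)).2.1.trans (hz n).2.1.symm)
          (fun n => inv_pos.2 (hρ (n + 1))) (fun n => inv_pos.2 (hρ n))
          (fun n => hsucc (n + 1)) hsucc (div_pos hL hU)
          (fun y hy => ratio_bounds_of_mem_Icc hL ((hz 1).2.2 y hy) ((hz 0).2.2 y hy)) n hx
    _ ≤ (1 - m / M) ^ n * (U / L / (L / U) - 1) * U :=
        mul_le_mul_of_nonneg_left ((hz n).2.2 x hx).2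
          (mul_nonneg (pow_nonneg (sub_nonneg.2 hk.div_mem_Ioc.2) n) hC)
    _ = (U / L / (L / U) - 1) * U * (1 - m / M) ^ n := by ring

theorem exists_eigen [IsFiniteMeasure μ] [NeZero μ] :
    ∃ w lam, 0 < lam ∧ Integrable w μ ∧ (∀ x ∈ s, 0 < w x) ∧
      (∀ x ∈ s, kernelOp μ k w x = lam * w x) ∧ ∫ y, w y ∂μ = 1 := by
  have hz := hk.powerIterate_mem (k := k)
  obtain ⟨lam, hlam, hw⟩ := hk.exists_eigen_of_tendsto
    (div_pos hk.pos (mul_pos (hk.pos.trans_le hk.le_of_neZero) measureReal_univ_pos))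
    (fun n => (hz n).1) (fun n => (hz n).2.1) (fun n => (hz n).2.2) (fun _ => powerIterate_succ)
    (w := fun x => limUnder atTop fun n => powerIterate μ k n x)
    fun x hx => (hk.cauchySeq_powerIterate hx).tendsto_limUnder
  exact ⟨_, lam, hlam, hw⟩

end IsPinchedKernel

theorem exists_isPinchedKernel_of_continuousOn [TopologicalSpace α] [OpensMeasurableSpace α]
    [SecondCountableTopology α] [SFinite μ] (hs : IsCompact s) (hsm : MeasurableSet s)
    (hne : s.Nonempty) (hkC : ContinuousOn (Function.uncurry k) (s ×ˢ s))
    (hkP : ∀ x ∈ s, ∀ y ∈ s, 0 < k x y) : ∃ m M, IsPinchedKernel (μ.restrict s) s k m M := by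
  obtain ⟨p, hp, hmin⟩ := (hs.prod hs).exists_isMinOn (hne.prod hne) hkC
  obtain ⟨q, -, hmax⟩ := (hs.prod hs).exists_isMaxOn (hne.prod hne) hkC
  refine ⟨_, _, ae_restrict_mem hsm, hkP p.1 hp.1 p.2 hp.2,
    fun x hx y hy => isMinOn_iff.1 hmin (x, y) ⟨hx, hy⟩,
    fun x hx y hy => isMaxOn_iff.1 hmax (x, y) ⟨hx, hy⟩, ?_, fun x hx => ?_⟩
  · rw [Measure.prod_restrict]
    exact hkC.aestronglyMeasurable (hsm.prod hsm)
  · exact (hkC.comp (Continuous.prodMk_right x).continuousOn fun y hy => ⟨hx, hy⟩)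
      |>.aestronglyMeasurable hsm

end

/-- Theorem 2.2: for a continuous strictly positive kernel `k`,
constant vulnerability `A` and no saturation (`β = 0`), the model admits exactly
one positive stationary state `(z*, F*)` (uniqueness of `z*` up to a.e.
equality), characterised by `F*·A·z*(x) = ∫ k(x,y) z*(y) dy` a.e. and
`∫ z* = μ/(K·A)`. -/
theorem unique_positive_stationary_state_constant_vulnerability_beta_zero
    (x1 x2 : ℝ) (hx : x1 < x2)
    (k : ℝ → ℝ → ℝ)
    (hkC : ContinuousOn (Function.uncurry k) (Icc x1 x2 ×ˢ Icc x1 x2))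
    (hkP : ∀ x ∈ Icc x1 x2, ∀ y ∈ Icc x1 x2, 0 < k x y)
    (A K μ : ℝ) (hA : 0 < A) (hK : 0 < K) (hμ : 0 < μ) :
    (∃ (zstar : ℝ → ℝ) (Fstar : ℝ),
      IntegrableOn zstar (Icc x1 x2) ∧
      (∀ᵐ x ∂(volume.restrict (Icc x1 x2)), 0 < zstar x) ∧
      0 < Fstar ∧
      (∀ᵐ x ∂(volume.restrict (Icc x1 x2)),
        Fstar * A * zstar x = ∫ y in Icc x1 x2, k x y * zstar y) ∧
      (∫ x in Icc x1 x2, zstar x) = μ / (K * A)) ∧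
    (∀ (z z' : ℝ → ℝ) (F F' : ℝ),
      (IntegrableOn z (Icc x1 x2) ∧
       (∀ᵐ x ∂(volume.restrict (Icc x1 x2)), 0 < z x) ∧
       0 < F ∧
       (∀ᵐ x ∂(volume.restrict (Icc x1 x2)),
         F * A * z x = ∫ y in Icc x1 x2, k x y * z y) ∧
       (∫ x in Icc x1 x2, z x) = μ / (K * A)) →
      (IntegrableOn z' (Icc x1 x2) ∧
       (∀ᵐ x ∂(volume.restrict (Icc x1 x2)), 0 < z' x) ∧
       0 < F' ∧
       (∀ᵐ x ∂(volume.restrict (Icc x1 x2)),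
         F' * A * z' x = ∫ y in Icc x1 x2, k x y * z' y) ∧
       (∫ x in Icc x1 x2, z' x) = μ / (K * A)) →
      F = F' ∧ z =ᵐ[volume.restrict (Icc x1 x2)] z') := by
  have : NeZero (volume.restrict (Icc x1 x2)) := ⟨by simp [Measure.restrict_eq_zero, hx]⟩
  obtain ⟨m, M, hk⟩ := exists_isPinchedKernel_of_continuousOn (μ := volume) isCompact_Icc
    measurableSet_Icc (nonempty_Icc.2 hx.le) hkC hkP
  have hc : 0 < μ / (K * A) := by positivity
  constructor
  · obtain ⟨w, lam, hlam, hw, hwpos, hTw, hw1⟩ := hk.exists_eigen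
    refine ⟨fun x => μ / (K * A) * w x, lam / A, hw.const_mul _,
      hk.ae_mem.mono fun x hx => mul_pos hc (hwpos x hx), div_pos hlam hA,
      hk.ae_mem.mono fun x hx => ?_, by rw [integral_const_mul, hw1, mul_one]⟩
    change lam / A * A * (μ / (K * A) * w x) = kernelOp _ k (fun y => μ / (K * A) * w y) x
    rw [div_mul_cancel₀ _ hA.ne', kernelOp_const_mul, hTw x hx, mul_left_comm]
  · rintro z z' F F' ⟨hz, hz0, hF, hTz, hzc⟩ ⟨hz', hz0', hF', hTz', hz'c⟩
    obtain ⟨hFF', hzz'⟩ := hk.eq_and_ae_eq_of_ae_eigen hc (mul_pos hF hA) (mul_pos hF' hA) hz hz'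
      (hz0.mono fun _ h => h.le) (hz0'.mono fun _ h => h.le) hzc hz'c hTz hTz'
    exact ⟨mul_right_cancel₀ hA.ne' hFF', hzz'⟩
end

section
/- Let x1 < x2, h = x2 − x1, let a : [x1,x2] → ℝ be continuous and strictly positive, let R, K, μ > 0, β ≥ 0, set I1 = ∫_{x1}^{x2} dx/a(x), and assume Kh − μβI1 > 0. Consider the constant inheritance kernel k ≡ R/h and the positive stationary state z*(x) = μ/((Kh − μβI1)·a(x)), F* = K·R·I1/(Kh − μβI1), Z* = μ·I1/(Kh − μβI1). Let λ ∈ ℂ satisfy λ ≠ −μ and λ + a(x)·R·I1/h ≠ 0 for all x ∈ [x1,x2]. Then there exist an integrable function w : [x1,x2] → ℂ and G ∈ ℂ with ∫_{x1}^{x2} w(x) dx = 1 satisfying, for a.e. x, 0 = w(x)·(λ + a(x)·R·I1/h) − R/h − βμR·I1/(K·h²) + G·μ/(K·h), and 0 = −(K·R·I1/h)·∫_{x1}^{x2} a(x) w(x) dx + βμR·I1/h + G·λ, if and only if λ satisfies the characteristic equation ∫_{x1}^{x2} [ R/h + βμR·I1/(K·h²) + μ(λ−R)/((λ+μ)·h)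 ] / (λ + a(x)·R·I1/h) dx = 1. -/
/-!
Write `d x = λ + a(x)·R·I₁/h`, `C = R/h + βμR·I₁/(K·h²)` and `m = μ/(K·h)`. The first
equation says `w = (C - G·m)/d` a.e., so the normalisation becomes `(C - G·m) ∫ 1/d = 1`.
Since `a·w = (C - G·m - λ·w)·h/(R·I₁)`, the integral in the second equation only depends on
`∫ w = 1` and `|[x₁, x₂]| = h`, and that equation becomes the linear relation
`G(λ + μ) + K(λ - R) = 0`. Substituting this `G` turns `C - G·m` into the numerator of the
characteristic equation.
-/

open MeasureTheory Set

section EigenvalueProblem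

variable {α : Type*} [MeasurableSpace α] {ν : Measure α} {lam N : ℂ} {q w : α → ℂ}

theorem ae_mul_eq_iff_ae_eq_mul_inv (hd : ∀ᵐ x ∂ν, lam + q x ≠ 0) :
    (∀ᵐ x ∂ν, w x * (lam + q x) = N) ↔ w =ᵐ[ν] fun x => N * (lam + q x)⁻¹ := by
  refine ⟨fun h => ?_, fun h => ?_⟩ <;> filter_upwards [h, hd] with x hx hdx
  exacts [(eq_mul_inv_iff_mul_eq₀ hdx).2 hx, (eq_mul_inv_iff_mul_eq₀ hdx).1 hx]

theorem integral_mul_eq_of_ae_mul_add_eq [IsFiniteMeasure ν] (hw : Integrable w ν)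
    (h : ∀ᵐ x ∂ν, w x * (lam + q x) = N) :
    ∫ x, q x * w x ∂ν = N * ν.real univ - lam * ∫ x, w x ∂ν := by
  calc ∫ x, q x * w x ∂ν = ∫ x, N - lam * w x ∂ν :=
        integral_congr_ae <| h.mono fun x hx => by linear_combination hx
    _ = N * ν.real univ - lam * ∫ x, w x ∂ν := by
        rw [integral_sub (integrable_const N) (hw.const_mul lam), integral_const,
          integral_const_mul, Complex.real_smul, mul_comm]

theorem exists_eigenpair_iff [IsFiniteMeasure ν] {a : α → ℝ} {c A B C m : ℂ} (hc : c ≠ 0)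
    (hq : ∀ x, q x = c * a x) (hd : ∀ᵐ x ∂ν, lam + q x ≠ 0)
    (hint : Integrable (fun x => (lam + q x)⁻¹) ν) :
    (∃ (w : α → ℂ) (G : ℂ), Integrable w ν ∧ ∫ x, w x ∂ν = 1 ∧
        (∀ᵐ x ∂ν, 0 = w x * (lam + q x) - C + G * m) ∧
        0 = -A * ∫ x, (a x : ℂ) * w x ∂ν + B + G * lam) ↔
      ∃ G : ℂ, (C - G * m) * ∫ x, (lam + q x)⁻¹ ∂ν = 1 ∧
        0 = -A * (((C - G * m) * ν.real univ - lam) / c) + B + G * lam := by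
  have hsolve : ∀ (G : ℂ) (w : α → ℂ), (∀ᵐ x ∂ν, 0 = w x * (lam + q x) - C + G * m) ↔
      w =ᵐ[ν] fun x => (C - G * m) * (lam + q x)⁻¹ := fun G w => by
    simp only [← ae_mul_eq_iff_ae_eq_mul_inv hd, eq_comm (a := (0 : ℂ)), sub_add, sub_eq_zero]
  have hmoment : ∀ N : ℂ, ∫ x, (a x : ℂ) * (N * (lam + q x)⁻¹) ∂ν
      = (N * ν.real univ - lam * (N * ∫ x, (lam + q x)⁻¹ ∂ν)) / c := fun N => by
    have hqa : ∫ x, q x * (N * (lam + q x)⁻¹) ∂ν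
        = c * ∫ x, (a x : ℂ) * (N * (lam + q x)⁻¹) ∂ν := by
      simp_rw [← integral_const_mul, ← mul_assoc, ← hq]
    rw [eq_div_iff hc, mul_comm, ← hqa, integral_mul_eq_of_ae_mul_add_eq (hint.const_mul N)
      ((ae_mul_eq_iff_ae_eq_mul_inv hd).2 .rfl), integral_const_mul]
  constructor
  · rintro ⟨w, G, -, hW, h1, h2⟩
    have hw := (hsolve G w).1 h1
    rw [integral_congr_ae hw, integral_const_mul] at hW
    have haw : (fun x => (a x : ℂ) * w x)
        =ᵐ[ν] fun x => (a x : ℂ) * ((C - G * m) * (lam + q x)⁻¹) :=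
      hw.mono fun x hx => congrArg _ hx
    rw [integral_congr_ae haw, hmoment, hW, mul_one] at h2
    exact ⟨G, hW, h2⟩
  · rintro ⟨G, hJ, h2⟩
    refine ⟨_, G, hint.const_mul _, by rwa [integral_const_mul], (hsolve G _).2 .rfl, ?_⟩
    rwa [hmoment, hJ, mul_one]

end EigenvalueProblem

theorem setIntegral_Icc_pos_of_continuousOn {f : ℝ → ℝ} {x1 x2 : ℝ} (hx : x1 < x2)
    (hf : ContinuousOn f (Icc x1 x2)) (hpos : ∀ x ∈ Icc x1 x2, 0 < f x) :
    0 < ∫ x in Icc x1 x2, f x := by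
  rw [integral_Icc_eq_integral_Ioc, ← intervalIntegral.integral_of_le hx.le]
  exact intervalIntegral.intervalIntegral_pos_of_pos_on (hf.intervalIntegrable_of_Icc hx.le)
    (fun x hx' => hpos x (Ioo_subset_Icc_self hx')) hx

theorem predator_equation_iff {𝕜 : Type*} [Field 𝕜] {K R μ β I1 h lam G : 𝕜}
    (hK : K ≠ 0) (hR : R ≠ 0) (hI1 : I1 ≠ 0) (hh : h ≠ 0) (hlam : lam + μ ≠ 0) :
    0 = -(K * R * I1 / h) * (((R / h + β * μ * R * I1 / (K * h ^ 2) - G * (μ / (K * h))) * h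
        - lam) / (R * I1 / h)) + β * μ * R * I1 / h + G * lam ↔
      G = -(K * (lam - R)) / (lam + μ) := by
  have hsimp : -(K * R * I1 / h) * (((R / h + β * μ * R * I1 / (K * h ^ 2) - G * (μ / (K * h))) * h
      - lam) / (R * I1 / h)) + β * μ * R * I1 / h + G * lam = G * (lam + μ) + K * (lam - R) := by
    field_simp
    ring
  rw [hsimp, eq_comm, add_eq_zero_iff_eq_neg, eq_div_iff hlam]

theorem constant_kernel_eigenvalue_iff_characteristic_equation_general
    (x1 x2 h : ℝ) (hx : x1 < x2) (hh : h = x2 - x1)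
    (a : ℝ → ℝ) (haC : ContinuousOn a (Icc x1 x2))
    (haP : ∀ x ∈ Icc x1 x2, 0 < a x)
    (R K μ β : ℝ) (hR : 0 < R) (hK : 0 < K)
    (I1 : ℝ) (hI1 : I1 = ∫ x in Icc x1 x2, 1 / a x)
    (lam : ℂ) (hlam : lam ≠ -(μ : ℂ))
    (hlam' : ∀ x ∈ Icc x1 x2, lam + ((a x * R * I1 / h : ℝ) : ℂ) ≠ 0) :
    (∃ (w : ℝ → ℂ) (G : ℂ),
      IntegrableOn w (Icc x1 x2) ∧
      (∫ x in Icc x1 x2, w x) = 1 ∧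
      (∀ᵐ x ∂(volume.restrict (Icc x1 x2)),
        0 = w x * (lam + ((a x * R * I1 / h : ℝ) : ℂ))
          - ((R / h : ℝ) : ℂ) - ((β * μ * R * I1 / (K * h ^ 2) : ℝ) : ℂ)
          + G * ((μ / (K * h) : ℝ) : ℂ)) ∧
      0 = -(((K * R * I1 / h : ℝ)) : ℂ) * (∫ x in Icc x1 x2, (a x : ℂ) * w x)
          + ((β * μ * R * I1 / h : ℝ) : ℂ) + G * lam)
    ↔
    (∫ x in Icc x1 x2,
        (((R / h : ℝ) : ℂ) + ((β * μ * R * I1 / (K * h ^ 2) : ℝ) : ℂ)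
            + (μ : ℂ) * (lam - (R : ℂ)) / ((lam + (μ : ℂ)) * (h : ℂ)))
          / (lam + ((a x * R * I1 / h : ℝ) : ℂ))) = 1 := by
  have hh0 : h ≠ 0 := by rw [hh]; linarith
  have hI1pos : 0 < I1 := hI1 ▸ setIntegral_Icc_pos_of_continuousOn hx
    (continuousOn_const.div haC fun x hx => (haP x hx).ne') fun x hx => one_div_pos.2 (haP x hx)
  have hlamμ : lam + μ ≠ 0 := fun h => hlam (eq_neg_of_add_eq_zero_left h)
  have hint : IntegrableOn (fun x => (lam + ((a x * R * I1 / h : ℝ) : ℂ))⁻¹) (Icc x1 x2) :=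
    ContinuousOn.integrableOn_Icc <| (continuousOn_const.add <|
      Complex.continuous_ofReal.comp_continuousOn
        (((haC.mul continuousOn_const).mul continuousOn_const).div_const h)).inv₀ hlam'
  simp only [sub_sub]
  refine (exists_eigenpair_iff (c := ((R * I1 / h : ℝ) : ℂ)) (by simp [hR.ne', hI1pos.ne', hh0])
    (fun x => by push_cast; ring) (ae_restrict_of_forall_mem measurableSet_Icc hlam') hint).trans ?_
  rw [measureReal_restrict_apply_univ, Real.volume_real_Icc_of_le hx.le, ← hh]
  have hKc : (K : ℂ) ≠ 0 := Complex.ofReal_ne_zero.2 hK.ne'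
  have hhc : (h : ℂ) ≠ 0 := Complex.ofReal_ne_zero.2 hh0
  have hG := fun G : ℂ => predator_equation_iff (β := (β : ℂ)) (G := G) hKc
    (Complex.ofReal_ne_zero.2 hR.ne') (Complex.ofReal_ne_zero.2 hI1pos.ne') hhc hlamμ
  push_cast
  simp only [hG, exists_eq_right]
  simp_rw [div_eq_mul_inv _ (lam + _), integral_const_mul]
  congr! 2
  field_simp
  ring

/-- Theorem 3.1: for the constant kernel `k ≡ R/h`, a complex
number `λ` (with `λ ≠ −μ` and `λ + a(x)R·I1/h ≠ 0` on `[x1,x2]`) is an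
eigenvalue of the linearisation at the positive stationary state — i.e. the
normalised eigenvalue problem in `(w, G)` has a solution — if and only if `λ`
satisfies the scalar characteristic equation. -/
theorem constant_kernel_eigenvalue_iff_characteristic_equation
    (x1 x2 h : ℝ) (hx : x1 < x2) (hh : h = x2 - x1)
    (a : ℝ → ℝ) (haC : ContinuousOn a (Icc x1 x2))
    (haP : ∀ x ∈ Icc x1 x2, 0 < a x)
    (R K μ β : ℝ) (hR : 0 < R) (hK : 0 < K) (hμ : 0 < μ) (hβ : 0 ≤ β)
    (I1 : ℝ) (hI1 : I1 = ∫ x in Icc x1 x2, 1 / a x)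
    (hpos : 0 < K * h - μ * β * I1)
    (zstar : ℝ → ℝ) (hzstar : zstar = fun x => μ / ((K * h - μ * β * I1) * a x))
    (Fstar : ℝ) (hFstar : Fstar = K * R * I1 / (K * h - μ * β * I1))
    (Zstar : ℝ) (hZstar : Zstar = μ * I1 / (K * h - μ * β * I1))
    (lam : ℂ) (hlam : lam ≠ -(μ : ℂ))
    (hlam' : ∀ x ∈ Icc x1 x2, lam + ((a x * R * I1 / h : ℝ) : ℂ) ≠ 0) :
    (∃ (w : ℝ → ℂ) (G : ℂ),
      IntegrableOn w (Icc x1 x2) ∧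
      (∫ x in Icc x1 x2, w x) = 1 ∧
      (∀ᵐ x ∂(volume.restrict (Icc x1 x2)),
        0 = w x * (lam + ((a x * R * I1 / h : ℝ) : ℂ))
          - ((R / h : ℝ) : ℂ) - ((β * μ * R * I1 / (K * h ^ 2) : ℝ) : ℂ)
          + G * ((μ / (K * h) : ℝ) : ℂ)) ∧
      0 = -(((K * R * I1 / h : ℝ)) : ℂ) * (∫ x in Icc x1 x2, (a x : ℂ) * w x)
          + ((β * μ * R * I1 / h : ℝ) : ℂ) + G * lam)
    ↔
    (∫ x in Icc x1 x2,
        (((R / h : ℝ) : ℂ) + ((β * μ * R * I1 / (K * h ^ 2) : ℝ) : ℂ)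
            + (μ : ℂ) * (lam - (R : ℂ)) / ((lam + (μ : ℂ)) * (h : ℂ)))
          / (lam + ((a x * R * I1 / h : ℝ) : ℂ))) = 1 :=
  constant_kernel_eigenvalue_iff_characteristic_equation_general x1 x2 h hx hh a haC haP R K μ β hR
    hK I1 hI1 lam hlam hlam'
end

section
/- Let x1 < x2, h = x2 − x1, let a : [x1,x2] → ℝ be continuous and strictly positive, let R, K, μ > 0, set I1 = ∫_{x1}^{x2} dx/a(x) and g(x) = a(x)·R·I1/h, and let ω > 0 be real. Then the equation ∫_{x1}^{x2} [ R/h + μ(iω−R)/((iω+μ)·h) ] / (iω + g(x)) dx = 1 holds if and only if both ∫_{x1}^{x2} ω²/(ω² + g(x)²) dx = h·μ/(R+μ) and ∫_{x1}^{x2} g(x)/(ω² + g(x)²) dx = h/(R+μ). -/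
/-!
The constant factor `C = R/h + μ(iω - R)/((iω + μ)h) = (R + μ)iω/((iω + μ)h)` pulls out of the
integral, so the characteristic equation says `∫ (iω + g)⁻¹ = C⁻¹ = h/(R+μ) - i·hμ/((R+μ)ω)`.
Since `(iω + g)⁻¹ = (g - iω)/(ω² + g²)`, comparing real and imaginary parts gives the two real
equations.
-/

open MeasureTheory Set Complex

lemma I_mul_add_ofReal_eq_mk (ω t : ℝ) : I * ω + t = ⟨t, ω⟩ :=
  Complex.ext (by simp) (by simp)

lemma I_mul_add_ofReal_ne_zero {ω : ℝ} (hω : ω ≠ 0) (t : ℝ) : I * ω + t ≠ 0 := by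
  rw [I_mul_add_ofReal_eq_mk]
  exact fun h0 => hω (congrArg im h0)

lemma re_inv_I_mul_add_ofReal (ω t : ℝ) : ((I * ω + t)⁻¹).re = t / (ω ^ 2 + t ^ 2) := by
  rw [I_mul_add_ofReal_eq_mk, inv_re, normSq_mk]
  ring

lemma im_inv_I_mul_add_ofReal (ω t : ℝ) :
    ((I * ω + t)⁻¹).im = -(ω ^ 2 / (ω ^ 2 + t ^ 2)) / ω := by
  rw [I_mul_add_ofReal_eq_mk, inv_im, normSq_mk]
  rcases eq_or_ne ω 0 with rfl | hω
  · simp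
  · field_simp
    ring

section Integral

variable {α : Type*} [MeasurableSpace α] {ν : Measure α} {ω : ℝ} {g : α → ℝ}

lemma integrableOn_inv_I_mul_add_ofReal [TopologicalSpace α] [T2Space α] [OpensMeasurableSpace α]
    [IsFiniteMeasureOnCompacts ν] {s : Set α} (hs : IsCompact s) (hg : ContinuousOn g s)
    (hω : ω ≠ 0) : IntegrableOn (fun x => (I * ω + g x)⁻¹) s ν :=
  ((continuousOn_const.add (continuous_ofReal.comp_continuousOn hg)).inv₀
    fun x _ => I_mul_add_ofReal_ne_zero hω (g x)).integrableOn_compact hs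

lemma re_integral_inv_I_mul_add_ofReal (hf : Integrable (fun x => (I * ω + g x)⁻¹) ν) :
    (∫ x, (I * ω + g x)⁻¹ ∂ν).re = ∫ x, g x / (ω ^ 2 + g x ^ 2) ∂ν := by
  simp_rw [← re_inv_I_mul_add_ofReal]
  exact (integral_re hf).symm

lemma im_integral_inv_I_mul_add_ofReal (hf : Integrable (fun x => (I * ω + g x)⁻¹) ν) :
    (∫ x, (I * ω + g x)⁻¹ ∂ν).im = -(∫ x, ω ^ 2 / (ω ^ 2 + g x ^ 2) ∂ν) / ω := by
  rw [← integral_neg, ← integral_div]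
  simp_rw [← im_inv_I_mul_add_ofReal]
  exact (integral_im hf).symm

end Integral

lemma hopf_factor_mul_eq_one {R μ h ω : ℝ} (hh : h ≠ 0) (hω : ω ≠ 0) (hRμ : R + μ ≠ 0) :
    (((R / h : ℝ) : ℂ) + μ * (I * ω - R) / ((I * ω + μ) * h)) *
      (((h / (R + μ) : ℝ) : ℂ) - I * ((h * μ / (R + μ) / ω : ℝ) : ℂ)) = 1 := by
  have hωμ : I * ω + μ ≠ 0 := by simpa using I_mul_add_ofReal_ne_zero hω μ
  have hRμ' : (R : ℂ) + μ ≠ 0 := by exact_mod_cast hRμ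
  have hh' : (h : ℂ) ≠ 0 := by exact_mod_cast hh
  have hω' : (ω : ℂ) ≠ 0 := by exact_mod_cast hω
  push_cast
  field_simp
  linear_combination (-(R + μ) * ω * μ : ℂ) * I_sq

theorem hopf_bifurcation_equations_constant_kernel_general
    (x1 x2 h : ℝ) (hx : x1 < x2) (hh : h = x2 - x1)
    (a : ℝ → ℝ) (haC : ContinuousOn a (Icc x1 x2))
    (R μ : ℝ) (hR : 0 < R) (hμ : 0 < μ)
    (I1 : ℝ)
    (g : ℝ → ℝ) (hg : g = fun x => a x * R * I1 / h)
    (ω : ℝ) (hω : 0 < ω) :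
    (∫ x in Icc x1 x2,
        (((R / h : ℝ) : ℂ)
            + (μ : ℂ) * (Complex.I * (ω : ℂ) - (R : ℂ))
              / ((Complex.I * (ω : ℂ) + (μ : ℂ)) * (h : ℂ)))
          / (Complex.I * (ω : ℂ) + ((g x : ℝ) : ℂ))) = 1
    ↔
    ((∫ x in Icc x1 x2, ω ^ 2 / (ω ^ 2 + (g x) ^ 2)) = h * μ / (R + μ) ∧
     (∫ x in Icc x1 x2, g x / (ω ^ 2 + (g x) ^ 2)) = h / (R + μ)) := by
  have hh0 : h ≠ 0 := hh ▸ sub_ne_zero.2 hx.ne'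
  have hfactor := hopf_factor_mul_eq_one hh0 hω.ne' (by positivity : R + μ ≠ 0)
  have hgC : ContinuousOn g (Icc x1 x2) := hg ▸ by fun_prop
  have hint : IntegrableOn _ _ volume :=
    integrableOn_inv_I_mul_add_ofReal isCompact_Icc hgC hω.ne'
  simp_rw [div_eq_mul_inv _ (I * _ + _)]
  rw [integral_const_mul, ← hfactor, mul_right_inj' (left_ne_zero_of_mul_eq_one hfactor),
    Complex.ext_iff, re_integral_inv_I_mul_add_ofReal hint, im_integral_inv_I_mul_add_ofReal hint]
  simp only [sub_re, sub_im, mul_re, mul_im, I_re, I_im, ofReal_re, ofReal_im]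
  rw [and_comm]
  simp [neg_div, div_left_inj' hω.ne']

/-- for `β = 0` and constant kernel `k ≡ R/h`, the characteristic
equation at a purely imaginary `λ = iω` (with `ω > 0`) holds if and only if the
pair of real Hopf-bifurcation equations holds. Here `g(x) = a(x)·R·I1/h`. -/
theorem hopf_bifurcation_equations_constant_kernel
    (x1 x2 h : ℝ) (hx : x1 < x2) (hh : h = x2 - x1)
    (a : ℝ → ℝ) (haC : ContinuousOn a (Icc x1 x2))
    (haP : ∀ x ∈ Icc x1 x2, 0 < a x)
    (R K μ : ℝ) (hR : 0 < R) (hK : 0 < K) (hμ : 0 < μ)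
    (I1 : ℝ) (hI1 : I1 = ∫ x in Icc x1 x2, 1 / a x)
    (g : ℝ → ℝ) (hg : g = fun x => a x * R * I1 / h)
    (ω : ℝ) (hω : 0 < ω) :
    (∫ x in Icc x1 x2,
        (((R / h : ℝ) : ℂ)
            + (μ : ℂ) * (Complex.I * (ω : ℂ) - (R : ℂ))
              / ((Complex.I * (ω : ℂ) + (μ : ℂ)) * (h : ℂ)))
          / (Complex.I * (ω : ℂ) + ((g x : ℝ) : ℂ))) = 1
    ↔
    ((∫ x in Icc x1 x2, ω ^ 2 / (ω ^ 2 + (g x) ^ 2)) = h * μ / (R + μ) ∧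
     (∫ x in Icc x1 x2, g x / (ω ^ 2 + (g x) ^ 2)) = h / (R + μ)) :=
  hopf_bifurcation_equations_constant_kernel_general x1 x2 h hx hh a haC R μ hR hμ I1 g hg ω hω
end

section
/- Let R, μ, a0, h > 0 and let a1 ∈ ℝ with a1 ≠ 0. Set A3 = 2R, A2 = R·(12a0² + a1²h²)·(R+μ)/(12a0²), A1 = 2R²μ, A0 = R³μ. Then every complex root λ of the quartic equation λ⁴ + A3·λ³ + A2·λ² + A1·λ + A0 = 0 satisfies Re(λ) < 0. -/
/-!
Routh–Hurwitz for monic real quartics `z⁴ + a₃z³ + a₂z² + a₁z + a₀`. Suppose a root `x + iy` had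
`x ≥ 0`. If `y = 0` the positive coefficients make the value positive. Otherwise the imaginary part
gives `y²(4x + a₃) = 4x³ + 3a₃x² + 2a₂x + a₁`; eliminating `y²` from the real part leaves minus a sextic
in `x` whose constant term is the Hurwitz determinant `a₃a₂a₁ - a₁² - a₃²a₀` and whose other
coefficients are positive as soon as `4a₀ < a₂²`, which the Hurwitz condition forces. For the
model's quartic the Hurwitz determinant is `4R³μ (A₂ - R(R + μ))`, positive because `a₁ ≠ 0`.
-/

namespace Complex

variable (a3 a2 a1 a0 : ℝ)

theorem re_quartic (z : ℂ) :
    (z ^ 4 + (a3 : ℂ) * z ^ 3 + (a2 : ℂ) * z ^ 2 + (a1 : ℂ) * z + (a0 : ℂ)).re =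
      z.re ^ 4 - 6 * z.re ^ 2 * z.im ^ 2 + z.im ^ 4 + a3 * (z.re ^ 3 - 3 * z.re * z.im ^ 2)
        + a2 * (z.re ^ 2 - z.im ^ 2) + a1 * z.re + a0 := by
  simp only [pow_succ, pow_zero, one_mul, add_re, mul_re, mul_im, ofReal_re, ofReal_im]
  ring

theorem im_quartic (z : ℂ) :
    (z ^ 4 + (a3 : ℂ) * z ^ 3 + (a2 : ℂ) * z ^ 2 + (a1 : ℂ) * z + (a0 : ℂ)).im =
      z.im * (4 * z.re ^ 3 + 3 * a3 * z.re ^ 2 + 2 * a2 * z.re + a1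
        - z.im ^ 2 * (4 * z.re + a3)) := by
  simp only [pow_succ, pow_zero, one_mul, add_im, mul_re, mul_im, ofReal_re, ofReal_im]
  ring

end Complex

section RouthHurwitz

def hurwitzSextic (a3 a2 a1 a0 x : ℝ) : ℝ :=
  (a3 * a2 * a1 - a1 ^ 2 - a3 ^ 2 * a0) + 2 * (a3 ^ 2 * a1 + a3 * (a2 ^ 2 - 4 * a0)) * x
    + 4 * (a3 * a1 + (a2 ^ 2 - 4 * a0) + 2 * a3 ^ 2 * a2) * x ^ 2
    + 8 * (4 * a3 * a2 + a3 ^ 3) * x ^ 3 + 16 * (3 * a3 ^ 2 + 2 * a2) * x ^ 4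
    + 96 * a3 * x ^ 5 + 64 * x ^ 6

variable {a3 a2 a1 a0 : ℝ}

theorem pos_of_hurwitz (ha3 : 0 < a3) (ha1 : 0 < a1) (ha0 : 0 < a0)
    (hΔ : a1 ^ 2 + a3 ^ 2 * a0 < a3 * a2 * a1) : 0 < a2 := by
  have : 0 < a3 * a1 * a2 := by nlinarith [mul_pos (pow_pos ha3 2) ha0, pow_pos ha1 2]
  exact pos_of_mul_pos_right this (mul_pos ha3 ha1).le

theorem four_mul_lt_sq_of_hurwitz (hΔ : a1 ^ 2 + a3 ^ 2 * a0 < a3 * a2 * a1) :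
    4 * a0 < a2 ^ 2 := by
  have : a3 ^ 2 * (4 * a0) < a3 ^ 2 * a2 ^ 2 := by nlinarith [sq_nonneg (a3 * a2 - 2 * a1)]
  exact lt_of_mul_lt_mul_left this (sq_nonneg a3)

theorem hurwitzSextic_pos (ha3 : 0 < a3) (ha1 : 0 < a1) (ha0 : 0 < a0)
    (hΔ : a1 ^ 2 + a3 ^ 2 * a0 < a3 * a2 * a1) {x : ℝ} (hx : 0 ≤ x) :
    0 < hurwitzSextic a3 a2 a1 a0 x := by
  unfold hurwitzSextic
  have ha2 := pos_of_hurwitz ha3 ha1 ha0 hΔ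
  have hd : 0 < a2 ^ 2 - 4 * a0 := sub_pos.2 (four_mul_lt_sq_of_hurwitz hΔ)
  have hΔ' : 0 < a3 * a2 * a1 - a1 ^ 2 - a3 ^ 2 * a0 := by linarith
  generalize a2 ^ 2 - 4 * a0 = d at hd ⊢
  generalize a3 * a2 * a1 - a1 ^ 2 - a3 ^ 2 * a0 = Δ at hΔ' ⊢
  positivity

theorem re_neg_of_quartic_eq_zero (ha3 : 0 < a3) (ha1 : 0 < a1) (ha0 : 0 < a0)
    (hΔ : a1 ^ 2 + a3 ^ 2 * a0 < a3 * a2 * a1) {z : ℂ}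
    (hz : z ^ 4 + (a3 : ℂ) * z ^ 3 + (a2 : ℂ) * z ^ 2 + (a1 : ℂ) * z + (a0 : ℂ) = 0) :
    z.re < 0 := by
  have hre := congrArg Complex.re hz
  have him := congrArg Complex.im hz
  rw [Complex.re_quartic, Complex.zero_re] at hre
  rw [Complex.im_quartic, Complex.zero_im] at him
  set x := z.re
  set y := z.im
  by_contra! hx
  have ha2 := pos_of_hurwitz ha3 ha1 ha0 hΔ
  rcases eq_or_ne y 0 with hy | hy
  · have hreal : x ^ 4 + a3 * x ^ 3 + a2 * x ^ 2 + a1 * x + a0 = 0 := by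
      rw [hy] at hre; linear_combination hre
    have : 0 < x ^ 4 + a3 * x ^ 3 + a2 * x ^ 2 + a1 * x + a0 := by positivity
    linarith
  · have hu : y ^ 2 * (4 * x + a3) = 4 * x ^ 3 + 3 * a3 * x ^ 2 + 2 * a2 * x + a1 := by
      linear_combination -((mul_eq_zero.1 him).resolve_left hy)
    -- `re · D² + sextic = (y²D - P)(y²D + P - (6x² + 3a₃x + a₂)D)`, where `hu : y²D = P`
    have : hurwitzSextic a3 a2 a1 a0 x = 0 := by
      unfold hurwitzSextic
      linear_combination -(4 * x + a3) ^ 2 * hre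
        + (y ^ 2 * (4 * x + a3) + (4 * x ^ 3 + 3 * a3 * x ^ 2 + 2 * a2 * x + a1)
          - (6 * x ^ 2 + 3 * a3 * x + a2) * (4 * x + a3)) * hu
    exact (hurwitzSextic_pos ha3 ha1 ha0 hΔ hx).ne' this

end RouthHurwitz

/-- Routh–Hurwitz stability of the quartic characteristic polynomial
arising from the constant-kernel model with linear vulnerability and small trait
interval: every complex root has negative real part. -/
theorem quartic_characteristic_roots_have_negative_real_part
    (R μ a0 h a1 : ℝ) (hR : 0 < R) (hμ : 0 < μ) (ha0 : 0 < a0) (hh : 0 < h)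
    (ha1 : a1 ≠ 0)
    (A3 A2 A1 A0 : ℝ)
    (hA3 : A3 = 2 * R)
    (hA2 : A2 = R * (12 * a0 ^ 2 + a1 ^ 2 * h ^ 2) * (R + μ) / (12 * a0 ^ 2))
    (hA1 : A1 = 2 * R ^ 2 * μ)
    (hA0 : A0 = R ^ 3 * μ) :
    ∀ lam : ℂ,
      lam ^ 4 + (A3 : ℂ) * lam ^ 3 + (A2 : ℂ) * lam ^ 2 + (A1 : ℂ) * lam + (A0 : ℂ) = 0 →
      lam.re < 0 := by
  intro lam hlam
  have hA2_gt : R * (R + μ) < A2 := by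
    have : 0 < R * (R + μ) * (a1 ^ 2 * h ^ 2) := by positivity
    rw [hA2, lt_div_iff₀ (by positivity)]
    linarith
  have hΔ : A1 ^ 2 + A3 ^ 2 * A0 < A3 * A2 * A1 := by
    have hdet : A3 * A2 * A1 - (A1 ^ 2 + A3 ^ 2 * A0) = 4 * R ^ 3 * μ * (A2 - R * (R + μ)) := by
      subst hA3 hA1 hA0; ring
    have : 0 < 4 * R ^ 3 * μ * (A2 - R * (R + μ)) := by
      have := sub_pos.2 hA2_gt; positivity
    linarith
  exact re_neg_of_quartic_eq_zero (by rw [hA3]; positivity) (by rw [hA1]; positivity)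
    (by rw [hA0]; positivity) hΔ hlam
end

section
/- Let x1 < x2, h = x2 − x1, let a, k : [x1,x2] → ℝ be continuous and strictly positive, let K, μ > 0, β ≥ 0, set I1 = ∫_{x1}^{x2} dx/a(x) and I2 = ∫_{x1}^{x2} k(x)/a(x) dx, assume Kh − μβI1 > 0, and consider the inheritance kernel k(x,y) = k(y) with positive stationary state z*(x) = μ/((Kh − μβI1)·a(x)), F* = K·h·I2/(Kh − μβI1), Z* = μ·I1/(Kh − μβI1). Let λ ∈ ℂ satisfy λ ≠ −μ, λ + a(x)·I2 ≠ 0 for all x ∈ [x1,x2], and λ·I3(λ) ≠ λ + μ, where I3(λ) = ∫_{x1}^{x2} k(x)/(λ + a(x)·I2) dx. Then there exist an integrable function w : [x1,x2] → ℂ and G ∈ ℂ with ∫_{x1}^{x2} w(x) dx = 1 satisfying, for a.e. x, 0 = w(x)·(λ + a(x)·I2) − ∫_{x1}^{x2} k(y) w(y) dy − βμI2/(Kh) + G·μ/(Kh), and 0 = −K·I2·∫_{x1}^{x2} a(x) w(x) dx + βμI2 + G·λ, if and only if λ satisfies the characteristic equation −μ·(I2·β·(λ+μ) + λ·K) / ((λ·I3(λ)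 − λ − μ)·K·h) · ∫_{x1}^{x2} dx/(λ + a(x)·I2) = 1. -/
/-!
The first equation says that `w(x) (λ + a(x) I₂)` is a.e. equal to a constant `C`, so every
eigenfunction is `C / (λ + a I₂)`. The eigenvalue problem thereby collapses to three scalar
equations in `C` and `G`: the normalisation `C ∫ 1/(λ + a I₂) = 1` and the two remaining
equations, in which `∫ a w` is evaluated through `I₂ ∫ a/(λ + a I₂) = h - λ ∫ 1/(λ + a I₂)`.
Eliminating `G` leaves `C K h (λ I₃ - λ - μ) = -μ (I₂ β (λ + μ) + λ K)`, and `C` is the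
reciprocal of `∫ 1/(λ + a I₂)`.
-/

open MeasureTheory Set

section EigenfunctionReduction

variable {α 𝕜 : Type*} [MeasurableSpace α] [RCLike 𝕜] {ν : Measure α}

lemma ae_eq_const_mul_inv_of_ae_mul_eq {w d : α → 𝕜} {c : 𝕜} (hd : ∀ᵐ x ∂ν, d x ≠ 0)
    (hw : ∀ᵐ x ∂ν, w x * d x = c) : w =ᵐ[ν] fun x => c * (d x)⁻¹ := by
  filter_upwards [hd, hw] with x hdx hwx
  rw [← hwx, mul_inv_cancel_right₀ hdx]

lemma integral_mul_eq_const_mul_of_ae_eq {u w f : α → 𝕜} {c : 𝕜}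
    (hw : w =ᵐ[ν] fun x => c * f x) : ∫ x, u x * w x ∂ν = c * ∫ x, u x * f x ∂ν := by
  rw [← integral_const_mul]
  refine integral_congr_ae ?_
  filter_upwards [hw] with x hx
  rw [hx, mul_left_comm]

lemma integral_mul_inv_add_eq [IsFiniteMeasure ν] {g : α → 𝕜} {lam : 𝕜}
    (hg : ∀ᵐ x ∂ν, lam + g x ≠ 0) (hf : Integrable (fun x => (lam + g x)⁻¹) ν) :
    ∫ x, g x * (lam + g x)⁻¹ ∂ν = ν.real univ - lam * ∫ x, (lam + g x)⁻¹ ∂ν := by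
  have hsplit : ∀ᵐ x ∂ν, g x * (lam + g x)⁻¹ = 1 - lam * (lam + g x)⁻¹ := by
    filter_upwards [hg] with x hx
    field_simp
    ring
  rw [integral_congr_ae hsplit, integral_sub (integrable_const 1) (hf.const_mul lam),
    integral_const, integral_const_mul, RCLike.real_smul_eq_coe_mul, mul_one]

theorem exists_eigenpair_iff_scalar_system (d u v : α → 𝕜) (p q r t lam : 𝕜)
    (hd : ∀ᵐ x ∂ν, d x ≠ 0) (hf : Integrable (fun x => (d x)⁻¹) ν) :
    (∃ (w : α → 𝕜) (G : 𝕜), Integrable w ν ∧ ∫ x, w x ∂ν = 1 ∧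
      (∀ᵐ x ∂ν, 0 = w x * d x - ∫ y, u y * w y ∂ν - p + G * q) ∧
      0 = -r * ∫ x, v x * w x ∂ν + t + G * lam) ↔
    ∃ C G : 𝕜, C * ∫ x, (d x)⁻¹ ∂ν = 1 ∧ C = C * ∫ x, u x * (d x)⁻¹ ∂ν + p - G * q ∧
      0 = -r * (C * ∫ x, v x * (d x)⁻¹ ∂ν) + t + G * lam := by
  constructor
  · rintro ⟨w, G, -, hw1, hwd, hG⟩
    have hwC : w =ᵐ[ν] fun x => (∫ y, u y * w y ∂ν + p - G * q) * (d x)⁻¹ :=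
      ae_eq_const_mul_inv_of_ae_mul_eq hd (hwd.mono fun x hx => by linear_combination -hx)
    refine ⟨∫ y, u y * w y ∂ν + p - G * q, G, ?_, ?_, ?_⟩
    · rw [← integral_const_mul, ← hw1]
      exact integral_congr_ae hwC.symm
    · rw [← integral_mul_eq_const_mul_of_ae_eq hwC]
    · rwa [← integral_mul_eq_const_mul_of_ae_eq hwC]
  · rintro ⟨C, G, hC1, hCu, hCv⟩
    have hw : (fun x => C * (d x)⁻¹) =ᵐ[ν] fun x => C * (d x)⁻¹ := .rfl
    refine ⟨fun x => C * (d x)⁻¹, G, hf.const_mul C, ?_, ?_, ?_⟩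
    · rwa [integral_const_mul]
    · filter_upwards [hd] with x hx
      rw [integral_mul_eq_const_mul_of_ae_eq hw, mul_right_comm, mul_inv_cancel_right₀ hx]
      linear_combination -hCu
    · rwa [integral_mul_eq_const_mul_of_ae_eq hw]

end EigenfunctionReduction

theorem scalar_system_iff_characteristic_equation {𝕜 : Type*} [Field 𝕜]
    {μ K h β I2 lam I3 J A : 𝕜} (hμ : μ ≠ 0) (hK : K ≠ 0) (hh : h ≠ 0)
    (hD : lam * I3 - lam - μ ≠ 0) (hA : I2 * A = h - lam * J) :
    (∃ C G : 𝕜, C * J = 1 ∧ C = C * I3 + β * μ * I2 / (K * h) - G * (μ / (K * h)) ∧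
      0 = -(K * I2) * (C * A) + β * μ * I2 + G * lam) ↔
    -μ * (I2 * β * (lam + μ) + lam * K) / ((lam * I3 - lam - μ) * K * h) * J = 1 := by
  have hDKh : (lam * I3 - lam - μ) * K * h ≠ 0 := mul_ne_zero (mul_ne_zero hD hK) hh
  rw [div_mul_eq_mul_div, div_eq_one_iff_eq hDKh]
  constructor
  · rintro ⟨C, G, hCJ, hCI3, hCA⟩
    have hG : G * μ = C * (I3 - 1) * (K * h) + β * μ * I2 := by
      field_simp at hCI3
      linear_combination hCI3
    have hC : C * (K * h) * (lam * I3 - lam - μ) = -μ * (I2 * β * (lam + μ) + lam * K) := by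
      linear_combination -lam * hG - μ * hCA + μ * K * C * hA - μ * K * lam * hCJ
    linear_combination -J * hC + (lam * I3 - lam - μ) * K * h * hCJ
  · intro hchar
    have hJ : J ≠ 0 := by
      rintro rfl
      exact hDKh (by simpa using hchar.symm)
    refine ⟨J⁻¹, (J⁻¹ * (I3 - 1) * (K * h) + β * μ * I2) / μ, inv_mul_cancel₀ hJ, ?_, ?_⟩
    · field_simp
      ring
    · field_simp
      linear_combination hchar + μ * K * hA

theorem kernel_of_y_eigenvalue_iff_characteristic_equation_general
    (x1 x2 h : ℝ) (hx : x1 < x2) (hh : h = x2 - x1)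
    (a k : ℝ → ℝ)
    (haC : ContinuousOn a (Icc x1 x2))
    (K μ β : ℝ) (hK : 0 < K) (hμ : 0 < μ)
    (I2 : ℝ)
    (lam : ℂ)
    (hlam' : ∀ x ∈ Icc x1 x2, lam + ((a x * I2 : ℝ) : ℂ) ≠ 0)
    (I3 : ℂ) (hI3 : I3 = ∫ x in Icc x1 x2, (k x : ℂ) / (lam + ((a x * I2 : ℝ) : ℂ)))
    (hI3' : lam * I3 ≠ lam + (μ : ℂ)) :
    (∃ (w : ℝ → ℂ) (G : ℂ),
      IntegrableOn w (Icc x1 x2) ∧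
      (∫ x in Icc x1 x2, w x) = 1 ∧
      (∀ᵐ x ∂(volume.restrict (Icc x1 x2)),
        0 = w x * (lam + ((a x * I2 : ℝ) : ℂ))
          - (∫ y in Icc x1 x2, (k y : ℂ) * w y)
          - ((β * μ * I2 / (K * h) : ℝ) : ℂ)
          + G * ((μ / (K * h) : ℝ) : ℂ)) ∧
      0 = -((K * I2 : ℝ) : ℂ) * (∫ x in Icc x1 x2, (a x : ℂ) * w x)
          + ((β * μ * I2 : ℝ) : ℂ) + G * lam)
    ↔
    -(μ : ℂ) * ((I2 : ℂ) * (β : ℂ) * (lam + (μ : ℂ)) + lam * (K : ℂ))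
        / ((lam * I3 - lam - (μ : ℂ)) * (K : ℂ) * (h : ℂ))
        * (∫ x in Icc x1 x2, 1 / (lam + ((a x * I2 : ℝ) : ℂ))) = 1 := by
  have hd : ∀ᵐ x ∂volume.restrict (Icc x1 x2), lam + ((a x * I2 : ℝ) : ℂ) ≠ 0 :=
    ae_restrict_of_forall_mem measurableSet_Icc hlam'
  have hf : IntegrableOn (fun x => (lam + ((a x * I2 : ℝ) : ℂ))⁻¹) (Icc x1 x2) :=
    ((continuousOn_const.add (Complex.continuous_ofReal.comp_continuousOn
      (haC.mul continuousOn_const))).inv₀ hlam').integrableOn_Icc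
  have hA : (I2 : ℂ) * ∫ x in Icc x1 x2, (a x : ℂ) * (lam + ((a x * I2 : ℝ) : ℂ))⁻¹ =
      h - lam * ∫ x in Icc x1 x2, (lam + ((a x * I2 : ℝ) : ℂ))⁻¹ := by
    have hsplit := integral_mul_inv_add_eq hd hf
    rw [measureReal_restrict_apply_univ, Real.volume_real_Icc_of_le hx.le, ← hh] at hsplit
    refine (integral_const_mul _ _).symm.trans (.trans ?_ hsplit)
    congr with x
    push_cast
    ring
  simp only [div_eq_mul_inv (k _ : ℂ)] at hI3
  refine (exists_eigenpair_iff_scalar_system _ _ _ _ _ _ _ _ hd hf).trans ?_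
  simp only [one_div, ← hI3]
  push_cast at hA ⊢
  exact scalar_system_iff_characteristic_equation (by exact_mod_cast hμ.ne')
    (by exact_mod_cast hK.ne') (by rw [hh]; exact_mod_cast (sub_pos.2 hx).ne')
    (fun h0 => hI3' (by linear_combination h0)) hA

/-- Theorem 3.2: for the kernel `k(x,y) = k(y)` depending only on
the second variable, a complex `λ` (satisfying the stated non-degeneracy
conditions) is an eigenvalue of the linearisation at the positive stationary
state — i.e. the normalised eigenvalue problem in `(w, G)` has a solution — if
and only if `λ` satisfies the scalar characteristic equation. -/
theorem kernel_of_y_eigenvalue_iff_characteristic_equation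
    (x1 x2 h : ℝ) (hx : x1 < x2) (hh : h = x2 - x1)
    (a k : ℝ → ℝ)
    (haC : ContinuousOn a (Icc x1 x2)) (haP : ∀ x ∈ Icc x1 x2, 0 < a x)
    (hkC : ContinuousOn k (Icc x1 x2)) (hkP : ∀ x ∈ Icc x1 x2, 0 < k x)
    (K μ β : ℝ) (hK : 0 < K) (hμ : 0 < μ) (hβ : 0 ≤ β)
    (I1 I2 : ℝ) (hI1 : I1 = ∫ x in Icc x1 x2, 1 / a x)
    (hI2 : I2 = ∫ x in Icc x1 x2, k x / a x)
    (hpos : 0 < K * h - μ * β * I1)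
    (zstar : ℝ → ℝ) (hzstar : zstar = fun x => μ / ((K * h - μ * β * I1) * a x))
    (Fstar : ℝ) (hFstar : Fstar = K * h * I2 / (K * h - μ * β * I1))
    (Zstar : ℝ) (hZstar : Zstar = μ * I1 / (K * h - μ * β * I1))
    (lam : ℂ) (hlam : lam ≠ -(μ : ℂ))
    (hlam' : ∀ x ∈ Icc x1 x2, lam + ((a x * I2 : ℝ) : ℂ) ≠ 0)
    (I3 : ℂ) (hI3 : I3 = ∫ x in Icc x1 x2, (k x : ℂ) / (lam + ((a x * I2 : ℝ) : ℂ)))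
    (hI3' : lam * I3 ≠ lam + (μ : ℂ)) :
    (∃ (w : ℝ → ℂ) (G : ℂ),
      IntegrableOn w (Icc x1 x2) ∧
      (∫ x in Icc x1 x2, w x) = 1 ∧
      (∀ᵐ x ∂(volume.restrict (Icc x1 x2)),
        0 = w x * (lam + ((a x * I2 : ℝ) : ℂ))
          - (∫ y in Icc x1 x2, (k y : ℂ) * w y)
          - ((β * μ * I2 / (K * h) : ℝ) : ℂ)
          + G * ((μ / (K * h) : ℝ) : ℂ)) ∧
      0 = -((K * I2 : ℝ) : ℂ) * (∫ x in Icc x1 x2, (a x : ℂ) * w x)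
          + ((β * μ * I2 : ℝ) : ℂ) + G * lam)
    ↔
    -(μ : ℂ) * ((I2 : ℂ) * (β : ℂ) * (lam + (μ : ℂ)) + lam * (K : ℂ))
        / ((lam * I3 - lam - (μ : ℂ)) * (K : ℂ) * (h : ℂ))
        * (∫ x in Icc x1 x2, 1 / (lam + ((a x * I2 : ℝ) : ℂ))) = 1 :=
  kernel_of_y_eigenvalue_iff_characteristic_equation_general x1 x2 h hx hh a k haC K μ β hK hμ I2
    lam hlam' I3 hI3 hI3'
end

section
/- Let x1 < x2, let k_i, kbar_i : [x1,x2] → ℝ (i = 1,…,n) be continuous and nonnegative, let a be continuous and strictly positive, let β ≥ 0, K, μ > 0, and let the inheritance kernel be k(x,y) = Σ_{i=1}^{n} k_i(x) kbar_i(y). Let F* > 0 and Z1, …, Z_{n+2} > 0 satisfy μ/K = Z2/(1+βZ1), F*·Z1/(1+βZ1) = Σ_{i=1}^{n} Z_{i+2}·∫ k_i/a, F*·Z2/(1+βZ1) = Σ_{i=1}^{n} Z_{i+2}·∫ k_i, and F*·Z_{j+2}/(1+βZ1) = Σ_{i=1}^{n} Z_{i+2}·∫ kbar_j k_i/a for j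 = 1,…,n, and set z*(x) = (1+βZ1)·Σ_{i=1}^{n} Z_{i+2} k_i(x)/(F*·a(x)). Let λ ∈ ℂ satisfy λ ≠ −μ and λ + F*a(x)/(1+βZ1) ≠ 0 for all x, set I_{0i} = ∫_{x1}^{x2} k_i(x) dx and I_{ij}(λ) = ∫_{x1}^{x2} k_i(x) kbar_j(x)/(λ + F*a(x)/(1+βZ1)) dx, and suppose the linear system B_j = Σ_{i=1}^{n} B_i·I_{ij}(λ) + [ β/(1+βZ1) + K·(λ − Σ_{i=1}^{n} B_i I_{0i})/((λ+μ)·F*) ]·Σ_{i=1}^{n} Z_{i+2}·I_{ij}(λ), j = 1,…,n, has a unique solution B ∈ ℂⁿ. Then there exist an integrable function w : [x1,x2] → ℂ and G ∈ ℂ with ∫_{x1}^{x2} w(x) dx = 1 satisfying, for a.e. x, 0 = w(x)·(λ + F*a(x)/(1+βZ1)) − Σ_{i=1}^{n} k_i(x)·∫_{x1}^{x2} kbar_i(y) w(y) dy − F*βa(x)z*(x)/(1+βZ1)² + G·a(x)z*(x)/(1+βZ1), and 0 = −K·∫_{x1}^{x2} F*a(x)w(x)/(1+βZ1) dx + F*βμ/(1+βZ1)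 + G·λ, if and only if λ satisfies the characteristic equation ∫_{x1}^{x2} [ Σ_{i=1}^{n} B_i k_i(x) + ( β/(1+βZ1) + K·(λ − Σ_{i=1}^{n} B_i I_{0i})/((λ+μ)·F*) )·Σ_{i=1}^{n} Z_{i+2} k_i(x) ] / (λ + F*a(x)/(1+βZ1)) dx = 1. -/
open MeasureTheory Set Finset

/-!
Because the kernel has finite rank and both terms containing `z*` are multiples of
`Σ Z_{i+2} k_i`, the first eigen-equation says that `w · (λ + F* a/(1 + βZ1))` is the combination
`Σ (B'_i + d Z_{i+2}) k_i` of the `k_i`, where `B'_i = ∫ kbar_i w` and `d = β/(1 + βZ1) - G/F*`.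
Dividing by `λ + F* a/(1 + βZ1)` and integrating against `kbar_j` shows that `B'` solves the linear
system for `B` with the bracket replaced by `d`; the scalar equation, together with
`K Σ Z_{i+2} I_{0i} = F* μ` (from the stationary equations), says exactly that `d` equals the bracket.
So `B' = B` by uniqueness and the normalisation `∫ w = 1` is the characteristic equation.
Conversely `w = Σ (B_i + d Z_{i+2}) k_i / (λ + F* a/(1 + βZ1))` with the bracket as `d` solves the
eigenproblem.
-/

theorem linearised_scalar_equation_iff {𝕜 : Type*} [Field 𝕜] {K F μ c S P b G : 𝕜} (hF : F ≠ 0)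
    (hc : c + μ ≠ 0) (hP : K * P = F * μ) :
    0 = -K * (S + (b - G / F) * P - c) + F * b * μ + G * c ↔
      b - G / F = b + K * (c - S) / ((c + μ) * F) := by
  have hlhs : -K * (S + (b - G / F) * P - c) + F * b * μ + G * c = K * (c - S) + G * (c + μ) := by
    linear_combination (-(b - G / F)) * hP + μ * div_mul_cancel₀ G hF
  have hrhs : b + K * (c - S) / ((c + μ) * F) - (b - G / F)
      = (K * (c - S) + G * (c + μ)) / ((c + μ) * F) := by
    field_simp
    ring
  rw [hlhs, eq_comm, @eq_comm _ (b - G / F), ← sub_eq_zero (a := b + _), hrhs, div_eq_zero_iff,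
    or_iff_left (mul_ne_zero hc hF)]

theorem sum_add_mul_mul {ι R : Type*} [Fintype ι] [CommSemiring R] (B Z v : ι → R) (d : R) :
    ∑ i, (B i + d * Z i) * v i = ∑ i, B i * v i + d * ∑ i, Z i * v i := by
  simp only [add_mul, sum_add_distrib, mul_sum, mul_assoc]

section FiniteRank

variable {α ι 𝕜 : Type*} [MeasurableSpace α] {ν : Measure α} [Fintype ι] [RCLike 𝕜]

theorem integral_sum_const_mul {f : ι → α → 𝕜} (hf : ∀ i, Integrable (f i) ν) (C : ι → 𝕜) :
    ∫ x, ∑ i, C i * f i x ∂ν = ∑ i, C i * ∫ x, f i x ∂ν := by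
  rw [integral_finsetSum _ fun i _ => (hf i).const_mul (C i)]
  simp only [integral_const_mul]

theorem integral_mul_eq_sum_of_mul_ae_eq {k : ι → α → 𝕜} {w g L : α → 𝕜} {C : ι → 𝕜}
    (hL : ∀ᵐ x ∂ν, L x ≠ 0) (hk : ∀ i, Integrable (fun x => k i x * g x / L x) ν)
    (h : ∀ᵐ x ∂ν, w x * L x = ∑ i, C i * k i x) :
    ∫ x, g x * w x ∂ν = ∑ i, C i * ∫ x, k i x * g x / L x ∂ν := by
  rw [← integral_sum_const_mul hk]
  refine integral_congr_ae ?_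
  filter_upwards [hL, h] with x hLx hx
  rw [← mul_div_cancel_right₀ (w x) hLx, hx, mul_div_assoc', mul_sum, sum_div]
  exact sum_congr rfl fun i _ => by ring

theorem integral_mul_of_mul_add_ae_eq {w m f : α → 𝕜} {c : 𝕜} (hw : Integrable w ν)
    (hf : Integrable f ν) (h : ∀ᵐ x ∂ν, w x * (c + m x) = f x) :
    ∫ x, m x * w x ∂ν = ∫ x, f x ∂ν - c * ∫ x, w x ∂ν := by
  rw [← integral_const_mul, ← integral_sub hf (hw.const_mul c)]
  refine integral_congr_ae ?_
  filter_upwards [h] with x hx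
  rw [← hx]
  ring

theorem exists_eigenfunction_iff_integral_eq_one
    (k kbar : ι → α → 𝕜) (m X Y : α → 𝕜) (Zv : ι → 𝕜) (lam b K F μ : 𝕜)
    (I : ι → ι → 𝕜) (I0 B : ι → 𝕜)
    (hL : ∀ᵐ x ∂ν, lam + m x ≠ 0) (hk : ∀ i, Integrable (k i) ν)
    (hkL : ∀ i, Integrable (fun x => k i x / (lam + m x)) ν)
    (hkk : ∀ i j, Integrable (fun x => k i x * kbar j x / (lam + m x)) ν)
    (hX : ∀ᵐ x ∂ν, X x = b * ∑ i, Zv i * k i x) (hY : ∀ᵐ x ∂ν, Y x = (∑ i, Zv i * k i x) / F)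
    (hI : ∀ i j, I i j = ∫ x, k i x * kbar j x / (lam + m x) ∂ν)
    (hI0 : ∀ i, I0 i = ∫ x, k i x ∂ν) (hP : K * ∑ i, Zv i * I0 i = F * μ)
    (hF : F ≠ 0) (hlam : lam + μ ≠ 0)
    (hB : ∀ j, B j = (∑ i, B i * I i j)
      + (b + K * (lam - ∑ i, B i * I0 i) / ((lam + μ) * F)) * ∑ i, Zv i * I i j)
    (hBuniq : ∀ B' : ι → 𝕜, (∀ j, B' j = (∑ i, B' i * I i j)
      + (b + K * (lam - ∑ i, B' i * I0 i) / ((lam + μ) * F)) * ∑ i, Zv i * I i j) → B' = B) :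
    (∃ (w : α → 𝕜) (G : 𝕜), Integrable w ν ∧ ∫ x, w x ∂ν = 1 ∧
      (∀ᵐ x ∂ν, 0 = w x * (lam + m x) - (∑ i, k i x * ∫ y, kbar i y * w y ∂ν) - X x + G * Y x) ∧
      0 = -K * (∫ x, m x * w x ∂ν) + F * b * μ + G * lam)
    ↔ ∫ x, ((∑ i, B i * k i x) + (b + K * (lam - ∑ i, B i * I0 i) / ((lam + μ) * F))
        * ∑ i, Zv i * k i x) / (lam + m x) ∂ν = 1 := by
  have hsumI : ∀ C : ι → 𝕜, Integrable (fun x => ∑ i, C i * k i x) ν := fun C =>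
    integrable_finsetSum _ fun i _ => (hk i).const_mul (C i)
  have hkbar : ∀ {w : α → 𝕜} {C : ι → 𝕜}, (∀ᵐ x ∂ν, w x * (lam + m x) = ∑ i, C i * k i x) →
      ∀ j, ∫ y, kbar j y * w y ∂ν = ∑ i, C i * I i j := fun h j => by
    simp only [hI]
    exact integral_mul_eq_sum_of_mul_ae_eq hL (fun i => hkk i j) h
  have hmass : ∀ {w : α → 𝕜} {C : ι → 𝕜}, Integrable w ν →
      (∀ᵐ x ∂ν, w x * (lam + m x) = ∑ i, C i * k i x) →
      ∫ x, m x * w x ∂ν = ∑ i, C i * I0 i - lam * ∫ x, w x ∂ν := fun hw h => by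
    rw [integral_mul_of_mul_add_ae_eq hw (hsumI _) h, integral_sum_const_mul hk]
    simp only [hI0]
  constructor
  · rintro ⟨w, G, hw, hnorm, h1, h2⟩
    obtain ⟨B', hB'⟩ : ∃ B' : ι → 𝕜, ∀ i, ∫ y, kbar i y * w y ∂ν = B' i := ⟨_, fun _ => rfl⟩
    have hwL : ∀ᵐ x ∂ν, w x * (lam + m x) = ∑ i, (B' i + (b - G / F) * Zv i) * k i x := by
      filter_upwards [h1, hX, hY] with x h1x hXx hYx
      simp only [hB', hXx, hYx, mul_comm (k _ x)] at h1x
      rw [sum_add_mul_mul]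
      field_simp at h1x ⊢
      linear_combination -h1x
    have hd : b - G / F = b + K * (lam - ∑ i, B' i * I0 i) / ((lam + μ) * F) := by
      refine (linearised_scalar_equation_iff hF hlam hP).1 ?_
      rwa [hmass hw hwL, hnorm, mul_one, sum_add_mul_mul] at h2
    obtain rfl : B' = B := hBuniq B' fun j => by
      rw [← hd, ← sum_add_mul_mul, ← hB' j, hkbar hwL j]
    refine (integral_congr_ae ?_).symm.trans hnorm
    filter_upwards [hwL, hL] with x hx hLx
    rw [← hd, ← sum_add_mul_mul, ← hx, mul_div_cancel_right₀ _ hLx]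
  · intro hchar
    obtain ⟨d, hd⟩ : ∃ d, b + K * (lam - ∑ i, B i * I0 i) / ((lam + μ) * F) = d := ⟨_, rfl⟩
    simp only [hd, ← sum_add_mul_mul] at hB hchar
    set w : α → 𝕜 := fun x => (∑ i, (B i + d * Zv i) * k i x) / (lam + m x)
    have hwL : ∀ᵐ x ∂ν, w x * (lam + m x) = ∑ i, (B i + d * Zv i) * k i x :=
      hL.mono fun x hx => div_mul_cancel₀ _ hx
    have hw : Integrable w ν := by
      refine (integrable_finsetSum univ fun i _ => (hkL i).const_mul (B i + d * Zv i)).congr ?_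
      filter_upwards with x
      simp only [w, sum_div, mul_div_assoc]
    obtain ⟨G, hG⟩ : ∃ G, b - G / F = d := ⟨F * (b - d), by field_simp; ring⟩
    refine ⟨w, G, hw, hchar, ?_, ?_⟩
    · filter_upwards [hwL, hX, hY] with x hx hXx hYx
      simp only [hkbar hwL, ← hB, hXx, hYx, mul_comm (k _ x)]
      rw [hx, sum_add_mul_mul]
      linear_combination (∑ i, Zv i * k i x) * hG
    · rw [hmass hw hwL, hchar, mul_one, sum_add_mul_mul, ← hG]
      exact (linearised_scalar_equation_iff hF hlam hP).2 (hG.trans hd.symm)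

end FiniteRank

theorem finite_rank_kernel_eigenvalue_iff_characteristic_equation_general
    (x1 x2 : ℝ) (n : ℕ)
    (k kbar : Fin n → ℝ → ℝ)
    (hkC : ∀ i, ContinuousOn (k i) (Icc x1 x2))
    (hkbarC : ∀ i, ContinuousOn (kbar i) (Icc x1 x2))
    (a : ℝ → ℝ) (haC : ContinuousOn a (Icc x1 x2))
    (haP : ∀ x ∈ Icc x1 x2, 0 < a x)
    (β K μ : ℝ) (hβ : 0 ≤ β) (hK : 0 < K)
    (F Z1 Z2 : ℝ) (Zv : Fin n → ℝ)
    (hF : 0 < F) (hZ1 : 0 < Z1)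
    (heq1 : μ / K = Z2 / (1 + β * Z1))
    (heq3 : F * Z2 / (1 + β * Z1)
      = ∑ i, Zv i * ∫ x in Icc x1 x2, k i x)
    (zstar : ℝ → ℝ)
    (hzstar : zstar = fun x => (1 + β * Z1) * (∑ i, Zv i * k i x) / (F * a x))
    (lam : ℂ) (hlam : lam ≠ -(μ : ℂ))
    (hlam' : ∀ x ∈ Icc x1 x2, lam + ((F * a x / (1 + β * Z1) : ℝ) : ℂ) ≠ 0)
    (I0 : Fin n → ℝ) (hI0 : ∀ i, I0 i = ∫ x in Icc x1 x2, k i x)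
    (I : Fin n → Fin n → ℂ)
    (hI : ∀ i j, I i j = ∫ x in Icc x1 x2,
      ((k i x * kbar j x : ℝ) : ℂ) / (lam + ((F * a x / (1 + β * Z1) : ℝ) : ℂ)))
    (B : Fin n → ℂ)
    (hB : ∀ j, B j = (∑ i, B i * I i j)
      + (((β / (1 + β * Z1) : ℝ) : ℂ)
          + (K : ℂ) * (lam - ∑ i, B i * ((I0 i : ℝ) : ℂ)) / ((lam + (μ : ℂ)) * (F : ℂ)))
        * ∑ i, ((Zv i : ℝ) : ℂ) * I i j)
    (hBuniq : ∀ B' : Fin n → ℂ,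
      (∀ j, B' j = (∑ i, B' i * I i j)
        + (((β / (1 + β * Z1) : ℝ) : ℂ)
            + (K : ℂ) * (lam - ∑ i, B' i * ((I0 i : ℝ) : ℂ)) / ((lam + (μ : ℂ)) * (F : ℂ)))
          * ∑ i, ((Zv i : ℝ) : ℂ) * I i j) → B' = B) :
    (∃ (w : ℝ → ℂ) (G : ℂ),
      IntegrableOn w (Icc x1 x2) ∧
      (∫ x in Icc x1 x2, w x) = 1 ∧
      (∀ᵐ x ∂(volume.restrict (Icc x1 x2)),
        0 = w x * (lam + ((F * a x / (1 + β * Z1) : ℝ) : ℂ))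
          - (∑ i, ((k i x : ℝ) : ℂ) * ∫ y in Icc x1 x2, ((kbar i y : ℝ) : ℂ) * w y)
          - ((F * β * a x * zstar x / (1 + β * Z1) ^ 2 : ℝ) : ℂ)
          + G * ((a x * zstar x / (1 + β * Z1) : ℝ) : ℂ)) ∧
      0 = -(K : ℂ) * (∫ x in Icc x1 x2, ((F * a x / (1 + β * Z1) : ℝ) : ℂ) * w x)
          + ((F * β * μ / (1 + β * Z1) : ℝ) : ℂ) + G * lam)
    ↔
    (∫ x in Icc x1 x2,
        ((∑ i, B i * ((k i x : ℝ) : ℂ))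
            + (((β / (1 + β * Z1) : ℝ) : ℂ)
                + (K : ℂ) * (lam - ∑ i, B i * ((I0 i : ℝ) : ℂ))
                  / ((lam + (μ : ℂ)) * (F : ℂ)))
              * ∑ i, ((Zv i : ℝ) : ℂ) * ((k i x : ℝ) : ℂ))
          / (lam + ((F * a x / (1 + β * Z1) : ℝ) : ℂ))) = 1 := by
  have hc : (1 + β * Z1 : ℝ) ≠ 0 := (add_pos_of_pos_of_nonneg one_pos (mul_nonneg hβ hZ1.le)).ne'
  have hLC : ContinuousOn (fun x => lam + ((F * a x / (1 + β * Z1) : ℝ) : ℂ)) (Icc x1 x2) := by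
    fun_prop
  have hkC' : ∀ i, ContinuousOn (fun x => ((k i x : ℝ) : ℂ)) (Icc x1 x2) := fun i => by fun_prop
  have hkbarC' : ∀ j, ContinuousOn (fun x => ((kbar j x : ℝ) : ℂ)) (Icc x1 x2) := fun j => by
    fun_prop
  have hP : K * ∑ i, Zv i * I0 i = F * μ := by
    have hZ : μ * (1 + β * Z1) = Z2 * K := (div_eq_div_iff hK.ne' hc).1 heq1
    simp only [hI0, ← heq3]
    field_simp
    linear_combination -hZ
  have hsource : ∀ x ∈ Icc x1 x2,
      F * β * a x * zstar x / (1 + β * Z1) ^ 2 = β / (1 + β * Z1) * ∑ i, Zv i * k i x ∧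
      a x * zstar x / (1 + β * Z1) = (∑ i, Zv i * k i x) / F := fun x hx => by
    have hax := (haP x hx).ne'
    constructor <;> rw [hzstar] <;> field_simp
  rw [show ((F * β * μ / (1 + β * Z1) : ℝ) : ℂ) = F * ((β / (1 + β * Z1) : ℝ) : ℂ) * μ by
    push_cast; ring]
  exact exists_eigenfunction_iff_integral_eq_one _ _ (fun x => ((F * a x / (1 + β * Z1) : ℝ) : ℂ))
    _ _ (fun i => (Zv i : ℂ)) _ _ _ _ _ _ (fun i => (I0 i : ℂ)) _
    (ae_restrict_of_forall_mem measurableSet_Icc hlam')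
    (fun i => (hkC' i).integrableOn_Icc) (fun i => ((hkC' i).div hLC hlam').integrableOn_Icc)
    (fun i j => (((hkC' i).mul (hkbarC' j)).div hLC hlam').integrableOn_Icc)
    (ae_restrict_of_forall_mem measurableSet_Icc fun x hx => by exact_mod_cast (hsource x hx).1)
    (ae_restrict_of_forall_mem measurableSet_Icc fun x hx => by exact_mod_cast (hsource x hx).2)
    (fun i j => by simp only [hI, Complex.ofReal_mul]) (fun i => by rw [hI0]; exact integral_ofReal.symm)
    (by exact_mod_cast hP) (by exact_mod_cast hF.ne')
    (fun h => hlam (eq_neg_of_add_eq_zero_left h)) hB hBuniq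

/-- Theorem 3.3: for the finite-rank kernel
`k(x,y) = Σ_i k_i(x) kbar_i(y)`, given a strictly positive solution
`(Z1, Z2, Zv, F*)` of the scalar stationary system (with `Zv i = Z_{i+2}`),
the corresponding stationary density `z*`, and a complex `λ` for which the
auxiliary linear system for `B` has a unique solution, the normalised
eigenvalue problem in `(w, G)` for the linearisation at `(z*, F*)` has a
solution if and only if `λ` satisfies the characteristic equation. -/
theorem finite_rank_kernel_eigenvalue_iff_characteristic_equation
    (x1 x2 : ℝ) (hx : x1 < x2) (n : ℕ)
    (k kbar : Fin n → ℝ → ℝ)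
    (hkC : ∀ i, ContinuousOn (k i) (Icc x1 x2))
    (hkbarC : ∀ i, ContinuousOn (kbar i) (Icc x1 x2))
    (hkN : ∀ i, ∀ x ∈ Icc x1 x2, 0 ≤ k i x)
    (hkbarN : ∀ i, ∀ x ∈ Icc x1 x2, 0 ≤ kbar i x)
    (a : ℝ → ℝ) (haC : ContinuousOn a (Icc x1 x2))
    (haP : ∀ x ∈ Icc x1 x2, 0 < a x)
    (β K μ : ℝ) (hβ : 0 ≤ β) (hK : 0 < K) (hμ : 0 < μ)
    (F Z1 Z2 : ℝ) (Zv : Fin n → ℝ)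
    (hF : 0 < F) (hZ1 : 0 < Z1) (hZ2 : 0 < Z2) (hZv : ∀ i, 0 < Zv i)
    (heq1 : μ / K = Z2 / (1 + β * Z1))
    (heq2 : F * Z1 / (1 + β * Z1)
      = ∑ i, Zv i * ∫ x in Icc x1 x2, k i x / a x)
    (heq3 : F * Z2 / (1 + β * Z1)
      = ∑ i, Zv i * ∫ x in Icc x1 x2, k i x)
    (heq4 : ∀ j, F * Zv j / (1 + β * Z1)
      = ∑ i, Zv i * ∫ x in Icc x1 x2, kbar j x * k i x / a x)
    (zstar : ℝ → ℝ)
    (hzstar : zstar = fun x => (1 + β * Z1) * (∑ i, Zv i * k i x) / (F * a x))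
    (lam : ℂ) (hlam : lam ≠ -(μ : ℂ))
    (hlam' : ∀ x ∈ Icc x1 x2, lam + ((F * a x / (1 + β * Z1) : ℝ) : ℂ) ≠ 0)
    (I0 : Fin n → ℝ) (hI0 : ∀ i, I0 i = ∫ x in Icc x1 x2, k i x)
    (I : Fin n → Fin n → ℂ)
    (hI : ∀ i j, I i j = ∫ x in Icc x1 x2,
      ((k i x * kbar j x : ℝ) : ℂ) / (lam + ((F * a x / (1 + β * Z1) : ℝ) : ℂ)))
    (B : Fin n → ℂ)
    (hB : ∀ j, B j = (∑ i, B i * I i j)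
      + (((β / (1 + β * Z1) : ℝ) : ℂ)
          + (K : ℂ) * (lam - ∑ i, B i * ((I0 i : ℝ) : ℂ)) / ((lam + (μ : ℂ)) * (F : ℂ)))
        * ∑ i, ((Zv i : ℝ) : ℂ) * I i j)
    (hBuniq : ∀ B' : Fin n → ℂ,
      (∀ j, B' j = (∑ i, B' i * I i j)
        + (((β / (1 + β * Z1) : ℝ) : ℂ)
            + (K : ℂ) * (lam - ∑ i, B' i * ((I0 i : ℝ) : ℂ)) / ((lam + (μ : ℂ)) * (F : ℂ)))
          * ∑ i, ((Zv i : ℝ) : ℂ) * I i j) → B' = B) :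
    (∃ (w : ℝ → ℂ) (G : ℂ),
      IntegrableOn w (Icc x1 x2) ∧
      (∫ x in Icc x1 x2, w x) = 1 ∧
      (∀ᵐ x ∂(volume.restrict (Icc x1 x2)),
        0 = w x * (lam + ((F * a x / (1 + β * Z1) : ℝ) : ℂ))
          - (∑ i, ((k i x : ℝ) : ℂ) * ∫ y in Icc x1 x2, ((kbar i y : ℝ) : ℂ) * w y)
          - ((F * β * a x * zstar x / (1 + β * Z1) ^ 2 : ℝ) : ℂ)
          + G * ((a x * zstar x / (1 + β * Z1) : ℝ) : ℂ)) ∧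
      0 = -(K : ℂ) * (∫ x in Icc x1 x2, ((F * a x / (1 + β * Z1) : ℝ) : ℂ) * w x)
          + ((F * β * μ / (1 + β * Z1) : ℝ) : ℂ) + G * lam)
    ↔
    (∫ x in Icc x1 x2,
        ((∑ i, B i * ((k i x : ℝ) : ℂ))
            + (((β / (1 + β * Z1) : ℝ) : ℂ)
                + (K : ℂ) * (lam - ∑ i, B i * ((I0 i : ℝ) : ℂ))
                  / ((lam + (μ : ℂ)) * (F : ℂ)))
              * ∑ i, ((Zv i : ℝ) : ℂ) * ((k i x : ℝ) : ℂ))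
          / (lam + ((F * a x / (1 + β * Z1) : ℝ) : ℂ))) = 1 :=
  finite_rank_kernel_eigenvalue_iff_characteristic_equation_general x1 x2 n k kbar hkC hkbarC a haC
    haP β K μ hβ hK F Z1 Z2 Zv hF hZ1 heq1 heq3 zstar hzstar lam hlam hlam' I0 hI0 I hI B hB hBuniq
end

section
/- Let x1 < x2, let k : [x1,x2]² → ℝ be measurable with 0 ≤ k(x,y) ≤ kbar for some constant kbar and all (x,y), and let c > 0 satisfy c ≤ ∫_{x1}^{x2} k(x,y) dy for every x ∈ [x1,x2]. Then the bounded linear operator T on L¹(x1,x2) defined by (Tw)(x) = (1/c)·∫_{x1}^{x2} k(x,y) w(y) dy satisfies ‖Tⁿ‖ ≥ 1 for every integer n ≥ 1, and consequently its spectral radius satisfies r(T) ≥ 1. -/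
/-! The constant function `1` is a nonnegative subinvariant vector of the positive operator `T`:
`1 ≤ T 1`. Iterating, `1 ≤ Tⁿ 1`, which gives `‖Tⁿ‖ ≥ 1`. If the real spectrum of `T` missed
`[1, ∞)`, the resolvent `R(λ) = (λ - T)⁻¹` would exist on all of `[1, ∞)`. It is positive for
`λ > ‖T‖` (Neumann series), and the identity `R(m) = (1 - (b - m) R(b))⁻¹ R(b)` carries positivity
from `b` down to `m` whenever `(b - m) ‖R(b)‖ < 1`; a uniform bound for `‖R‖` on a compact
interval therefore brings it down to `λ = 1`. But `R(1) (T 1 - 1) = -1`, contradicting the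
positivity of `R(1)`. -/

open MeasureTheory Set

open scoped ENNReal

theorem resolvent_eq_inverse_one_sub_smul_mul {𝕜 A : Type*} [Field 𝕜] [Ring A] [Algebra 𝕜 A]
    {a : A} {b m : 𝕜} (hb : b ∈ resolventSet 𝕜 a) :
    resolvent a m = Ring.inverse (1 - (b - m) • resolvent a b) * resolvent a b := by
  have hfactor :
      algebraMap 𝕜 A m - a = (algebraMap 𝕜 A b - a) * (1 - (b - m) • resolvent a b) := by
    rw [mul_sub, mul_one, mul_smul_comm, resolvent, Ring.mul_inverse_cancel _ hb,
      Algebra.algebraMap_eq_smul_one, Algebra.algebraMap_eq_smul_one, sub_smul]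
    abel
  have hcomm : Commute (algebraMap 𝕜 A b - a) (1 - (b - m) • resolvent a b) := by
    refine (Commute.one_right _).sub_right (Commute.smul_right ?_ _)
    rw [Commute, SemiconjBy, resolvent, Ring.mul_inverse_cancel _ hb, Ring.inverse_mul_cancel _ hb]
  rw [resolvent, hfactor, Ring.mul_inverse_rev' hcomm]
  rfl

theorem one_le_norm_pow_of_le_apply {E : Type*} [NormedAddCommGroup E] [Lattice E]
    [HasSolidNorm E] [IsOrderedAddMonoid E] [NormedSpace ℝ E] {T : E →L[ℝ] E} (hT : Monotone T)
    {u : E} (hu0 : 0 ≤ u) (hu : u ≠ 0) (hTu : u ≤ T u) (n : ℕ) : 1 ≤ ‖T ^ n‖ := by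
  have hle : u ≤ (T ^ n) u := by
    rw [FunLike.coe_pow_eq_iterate]
    exact hT.monotone_iterate_of_le_map hTu n.zero_le
  have hnorm : ‖u‖ ≤ ‖(T ^ n) u‖ := norm_le_norm_of_abs_le_abs <| by
    rwa [abs_of_nonneg hu0, abs_of_nonneg (hu0.trans hle)]
  exact le_of_mul_le_mul_right (by simpa using hnorm.trans ((T ^ n).le_opNorm u))
    (norm_pos_iff.2 hu)

section PositiveOperator

variable {E : Type*} [NormedAddCommGroup E] [PartialOrder E] [IsOrderedAddMonoid E]
  [NormedSpace ℝ E] {T : E →L[ℝ] E}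

theorem nonpos_of_le_apply_of_monotone_resolvent_one (h1 : (1 : ℝ) ∈ resolventSet ℝ T)
    (hR : Monotone ⇑(resolvent T (1 : ℝ))) {u : E} (hu : u ≤ T u) : u ≤ 0 := by
  have hRT : resolvent T (1 : ℝ) * T = resolvent T (1 : ℝ) - 1 := by
    have h : resolvent T (1 : ℝ) * (1 - T) = 1 := by
      simpa [resolvent] using Ring.inverse_mul_cancel _ h1
    rw [mul_sub, mul_one] at h
    rw [eq_sub_iff_add_eq, ← h]
    abel
  have h := hR hu
  change _ ≤ (resolvent T (1 : ℝ) * T) u at h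
  rw [hRT] at h
  simpa using h

variable [CompleteSpace E] [OrderClosedTopology E]

theorem monotone_inverse_one_sub {A : E →L[ℝ] E} (hA : Monotone A) (h : ‖A‖ < 1) :
    Monotone ⇑(Ring.inverse (1 - A)) := by
  refine (monotone_iff_map_nonneg _).2 fun f hf => ?_
  refine ((hasSum_geom_series_inverse A h).mapL (ContinuousLinearMap.apply ℝ E f)).nonneg
    fun n => ?_
  have hAn : Monotone ⇑(A ^ n) := FunLike.coe_pow_eq_iterate A n ▸ hA.iterate n
  exact (monotone_iff_map_nonneg _).1 hAn f hf

variable [PosSMulMono ℝ E]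

theorem monotone_resolvent_of_norm_lt (hT : Monotone T) {r : ℝ} (hr : ‖T‖ < r) :
    Monotone ⇑(resolvent T r) := by
  have hr0 : 0 < r := (norm_nonneg T).trans_lt hr
  have hnorm : ‖r⁻¹ • T‖ < 1 := by
    rw [norm_smul, Real.norm_of_nonneg (inv_nonneg.2 hr0.le), inv_mul_lt_one₀ hr0]
    exact hr
  have hres : resolvent T r = r⁻¹ • Ring.inverse (1 - r⁻¹ • T) := by
    have h := spectrum.units_smul_resolvent_self (r := Units.mk0 r hr0.ne') (a := T)
    simp only [Units.smul_def, Units.val_mk0, Units.val_inv_eq_inv_val] at h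
    rw [← inv_smul_smul₀ hr0.ne' (resolvent T r), h, resolvent, map_one]
  rw [hres, FunLike.coe_smul]
  exact (monotone_inverse_one_sub (hT.const_smul (inv_nonneg.2 hr0.le)) hnorm).const_smul
    (inv_nonneg.2 hr0.le)

theorem monotone_resolvent_of_sub_mul_norm_lt {b m : ℝ} (hb : b ∈ resolventSet ℝ T)
    (hRb : Monotone ⇑(resolvent T b)) (hmb : m ≤ b) (h : (b - m) * ‖resolvent T b‖ < 1) :
    Monotone ⇑(resolvent T m) := by
  have hbm : 0 ≤ b - m := sub_nonneg.2 hmb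
  have hnorm : ‖(b - m) • resolvent T b‖ < 1 := by
    rwa [norm_smul, Real.norm_of_nonneg hbm]
  rw [resolvent_eq_inverse_one_sub_smul_mul hb]
  exact (monotone_inverse_one_sub (hRb.const_smul hbm) hnorm).comp hRb

theorem monotone_resolvent_of_Icc_subset_resolventSet {a b : ℝ} (hab : a ≤ b)
    (hsub : Icc a b ⊆ resolventSet ℝ T) (hb : Monotone ⇑(resolvent T b)) :
    Monotone ⇑(resolvent T a) := by
  obtain ⟨M, hM⟩ := isCompact_Icc.exists_bound_of_continuousOn fun s hs =>
    (spectrum.hasDerivAt_resolvent_const_left (hsub hs)).continuousAt.continuousWithinAt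
  have hM0 : 0 ≤ M := (norm_nonneg _).trans (hM b ⟨hab, le_rfl⟩)
  set δ := (M + 1)⁻¹ with hδ
  have hδ0 : 0 < δ := by positivity
  have hδM : δ * M < 1 := by
    rw [hδ, inv_mul_lt_one₀ (by positivity)]
    linarith
  have hdescent : ∀ n : ℕ, ∀ s ∈ Icc a b, b - s ≤ n * δ → Monotone ⇑(resolvent T s) := by
    intro n
    induction n with
    | zero =>
      intro s hs hbs
      rwa [le_antisymm hs.2 (by simpa using hbs)]
    | succ n ih =>
      intro s hs hbs
      set t := min b (s + δ)
      have ht : t ∈ Icc a b := ⟨hs.1.trans (le_min hs.2 (by linarith)), min_le_left _ _⟩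
      have hst : s ≤ t := le_min hs.2 (by linarith)
      have hbt : b - t ≤ n * δ := by
        rw [Nat.cast_succ, add_one_mul] at hbs
        rcases min_choice b (s + δ) with h | h <;> simp only [t, h] <;>
          nlinarith [mul_nonneg n.cast_nonneg hδ0.le]
      refine monotone_resolvent_of_sub_mul_norm_lt (hsub ht) (ih t ht hbt) hst ?_
      calc (t - s) * ‖resolvent T t‖ ≤ δ * M :=
            mul_le_mul (by linarith [min_le_right b (s + δ)]) (hM t ht) (norm_nonneg _) hδ0.le
        _ < 1 := hδM
  obtain ⟨n, hn⟩ := exists_nat_ge ((b - a) / δ)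
  exact hdescent n a ⟨le_rfl, hab⟩ (by rwa [div_le_iff₀ hδ0] at hn)

theorem one_le_spectralRadius_of_le_apply (hT : Monotone T) {u : E} (hu0 : 0 ≤ u) (hu : u ≠ 0)
    (hTu : u ≤ T u) : 1 ≤ spectralRadius ℝ T := by
  refine le_of_not_gt fun hlt => ?_
  have hρ : ∀ s : ℝ, 1 ≤ s → s ∈ resolventSet ℝ T := by
    intro s hs
    refine spectrum.mem_resolventSet_of_spectralRadius_lt (hlt.trans_le ?_)
    rw [Real.nnnorm_of_nonneg (zero_le_one.trans hs)]
    exact_mod_cast hs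
  have hR1 : Monotone ⇑(resolvent T (1 : ℝ)) :=
    monotone_resolvent_of_Icc_subset_resolventSet (by linarith [norm_nonneg T])
      (fun s hs => hρ s hs.1) (monotone_resolvent_of_norm_lt hT (lt_add_one ‖T‖))
  exact hu (le_antisymm (nonpos_of_le_apply_of_monotone_resolvent_one (hρ 1 le_rfl) hR1 hTu) hu0)

end PositiveOperator

instance Lp.instPosSMulMono {α E : Type*} [MeasurableSpace α] {μ : Measure α} {p : ℝ≥0∞}
    [NormedAddCommGroup E] [PartialOrder E] [IsOrderedAddMonoid E] [NormedSpace ℝ E]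
    [PosSMulMono ℝ E] :
    PosSMulMono ℝ (Lp E p μ) :=
  PosSMulMono.of_smul_nonneg fun a ha f hf => by
    rw [← Lp.coeFn_nonneg] at hf ⊢
    filter_upwards [Lp.coeFn_smul a f, hf] with x hx hfx
    rw [hx]
    exact smul_nonneg ha hfx

theorem Lp.const_nonneg {α E : Type*} [MeasurableSpace α] {μ : Measure α} [IsFiniteMeasure μ]
    {p : ℝ≥0∞} [NormedAddCommGroup E] [PartialOrder E] {c : E} (hc : 0 ≤ c) :
    0 ≤ Lp.const p μ c := by
  refine (Lp.coeFn_nonneg _).1 ((Lp.coeFn_const p μ c).mono fun x hx => ?_)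
  rw [Pi.zero_apply, hx]
  exact hc

theorem Lp.const_ne_zero {α E : Type*} [MeasurableSpace α] {μ : Measure α} [IsFiniteMeasure μ]
    [NeZero μ] {p : ℝ≥0∞} [NormedAddCommGroup E] {c : E} (hc : c ≠ 0) : Lp.const p μ c ≠ 0 := by
  intro h
  have h0 : ∀ᵐ x ∂μ, c = 0 := by
    filter_upwards [Lp.coeFn_const p μ c, Lp.coeFn_zero E p μ] with x hconst hzero
    rw [h] at hconst
    exact hconst.symm.trans hzero
  obtain ⟨_, hc0⟩ := h0.exists
  exact hc hc0

section KernelOperator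

variable {α : Type*} [MeasurableSpace α] {μ : Measure α} {p : ℝ≥0∞} [Fact (1 ≤ p)]
  {K : α → α → ℝ} {T : Lp ℝ p μ →L[ℝ] Lp ℝ p μ}

theorem monotone_of_kernel_nonneg (hK : ∀ x y, 0 ≤ K x y)
    (hT : ∀ w : Lp ℝ p μ, T w =ᵐ[μ] fun x => ∫ y, K x y * w y ∂μ) : Monotone T := by
  refine (monotone_iff_map_nonneg T).2 fun w hw => ?_
  rw [← Lp.coeFn_nonneg] at hw ⊢
  filter_upwards [hT w] with x hx
  rw [Pi.zero_apply, hx]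
  exact integral_nonneg_of_ae (hw.mono fun y hy => mul_nonneg (hK x y) hy)

theorem const_le_apply_const_of_one_le_integral_kernel [IsFiniteMeasure μ]
    (hrow : ∀ᵐ x ∂μ, 1 ≤ ∫ y, K x y ∂μ)
    (hT : ∀ w : Lp ℝ p μ, T w =ᵐ[μ] fun x => ∫ y, K x y * w y ∂μ) :
    Lp.const p μ (1 : ℝ) ≤ T (Lp.const p μ 1) := by
  have hint : ∀ x, ∫ y, K x y * Lp.const p μ (1 : ℝ) y ∂μ = ∫ y, K x y ∂μ := fun x =>
    integral_congr_ae <| (Lp.coeFn_const p μ (1 : ℝ)).mono fun y hy => by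
      simp only [hy, Function.const_apply, mul_one]
  refine (Lp.coeFn_le _ _).1 ?_
  filter_upwards [hT (Lp.const p μ 1), Lp.coeFn_const p μ (1 : ℝ), hrow] with x hTx hx hrowx
  rw [hTx, hx, hint]
  exact hrowx

end KernelOperator

theorem normalised_integral_operator_spectral_radius_ge_one_general
    (x1 x2 : ℝ) (hx : x1 < x2)
    (k : ℝ → ℝ → ℝ) (hk0 : ∀ x y, 0 ≤ k x y)
    (c : ℝ) (hc : 0 < c)
    (hrow : ∀ x ∈ Icc x1 x2, c ≤ ∫ y in Icc x1 x2, k x y)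
    (T : Lp ℝ 1 (volume.restrict (Icc x1 x2)) →L[ℝ]
         Lp ℝ 1 (volume.restrict (Icc x1 x2)))
    (hT : ∀ w : Lp ℝ 1 (volume.restrict (Icc x1 x2)),
      (T w : ℝ → ℝ) =ᵐ[volume.restrict (Icc x1 x2)]
        fun x => (1 / c) * ∫ y in Icc x1 x2, k x y * w y) :
    (∀ n : ℕ, 1 ≤ n → 1 ≤ ‖T ^ n‖) ∧ 1 ≤ spectralRadius ℝ T := by
  have : NeZero (volume.restrict (Icc x1 x2)) := ⟨by simp [Measure.restrict_eq_zero, hx]⟩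
  have hTK : ∀ w : Lp ℝ 1 (volume.restrict (Icc x1 x2)), (T w : ℝ → ℝ) =ᵐ[_]
      fun x => ∫ y in Icc x1 x2, c⁻¹ * k x y * w y := fun w =>
    (hT w).mono fun x hx => by simp only [hx, one_div, mul_assoc, integral_const_mul]
  have hrowK : ∀ᵐ x ∂volume.restrict (Icc x1 x2), 1 ≤ ∫ y in Icc x1 x2, c⁻¹ * k x y :=
    (ae_restrict_mem measurableSet_Icc).mono fun x hx => by
      rw [integral_const_mul, le_inv_mul_iff₀ hc, mul_one]
      exact hrow x hx
  have hTmono := monotone_of_kernel_nonneg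
    (fun x y => mul_nonneg (inv_nonneg.2 hc.le) (hk0 x y)) hTK
  have hu0 := Lp.const_nonneg (p := 1) (μ := volume.restrict (Icc x1 x2)) (zero_le_one (α := ℝ))
  have hu := Lp.const_ne_zero (p := 1) (μ := volume.restrict (Icc x1 x2)) (one_ne_zero (α := ℝ))
  have hTu := const_le_apply_const_of_one_le_integral_kernel hrowK hTK
  exact ⟨fun n _ => one_le_norm_pow_of_le_apply hTmono hu0 hu hTu n,
    one_le_spectralRadius_of_le_apply hTmono hu0 hu hTu⟩

/-- if the measurable kernel `k` is bounded, `0 ≤ k ≤ kbar`, and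
its row integrals are bounded below by `c > 0`, then the integral operator
`(Tw)(x) = (1/c)·∫ k(x,y) w(y) dy` on `L¹(x1,x2)` satisfies `‖Tⁿ‖ ≥ 1` for all
`n ≥ 1`, and hence its spectral radius is at least `1`. -/
theorem normalised_integral_operator_spectral_radius_ge_one
    (x1 x2 : ℝ) (hx : x1 < x2)
    (k : ℝ → ℝ → ℝ) (hkM : Measurable (Function.uncurry k))
    (kbar : ℝ) (hk0 : ∀ x y, 0 ≤ k x y) (hkb : ∀ x y, k x y ≤ kbar)
    (c : ℝ) (hc : 0 < c)
    (hrow : ∀ x ∈ Icc x1 x2, c ≤ ∫ y in Icc x1 x2, k x y)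
    (T : Lp ℝ 1 (volume.restrict (Icc x1 x2)) →L[ℝ]
         Lp ℝ 1 (volume.restrict (Icc x1 x2)))
    (hT : ∀ w : Lp ℝ 1 (volume.restrict (Icc x1 x2)),
      (T w : ℝ → ℝ) =ᵐ[volume.restrict (Icc x1 x2)]
        fun x => (1 / c) * ∫ y in Icc x1 x2, k x y * w y) :
    (∀ n : ℕ, 1 ≤ n → 1 ≤ ‖T ^ n‖) ∧ 1 ≤ spectralRadius ℝ T :=
  normalised_integral_operator_spectral_radius_ge_one_general x1 x2 hx k hk0 c hc hrow T hT
end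

section
/- Let x1 < x2, let k_i, kbar_i : [x1,x2] → ℝ (i = 1,…,n) be continuous and nonnegative, let a be continuous and strictly positive, let β ≥ 0, K, μ > 0, and let k(x,y) = Σ_{i=1}^{n} k_i(x) kbar_i(y). Suppose F > 0 and Z1, …, Z_{n+2} > 0 satisfy the scalar system: μ/K = Z2/(1+βZ1); F·Z1/(1+βZ1) = Σ_{i=1}^{n} Z_{i+2}·∫_{x1}^{x2} k_i(x)/a(x) dx; F·Z2/(1+βZ1) = Σ_{i=1}^{n} Z_{i+2}·∫_{x1}^{x2} k_i(x) dx; and F·Z_{j+2}/(1+βZ1) = Σ_{i=1}^{n} Z_{i+2}·∫_{x1}^{x2} kbar_j(x) k_i(x)/a(x) dx for j = 1,…,n. Define z*(x) = (1+βZ1)·Σ_{i=1}^{n} Z_{i+2} k_i(x)/(F·a(x)) and F* = F. Then ∫_{x1}^{x2} z* = Z1, ∫_{x1}^{x2} a z* = Z2, ∫_{x1}^{x2} kbar_j z* = Z_{j+2} for each j, and (z*, F*) is a stationary state of the model: ∫_{x1}^{x2} k(x,y) z*(y) dy = F* a(x) z*(x)/(1 + β∫_{x1}^{x2} z*) for every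 x and μ/K = (∫_{x1}^{x2} a z*)/(1 + β∫_{x1}^{x2} z*). -/
open MeasureTheory Set Finset

/-! The profile `z*` is a linear combination of the `k_i / a`, so every moment `∫ g z*` is the
same linear combination of the moments `∫ g k_i / a`; for `g = 1`, `g = a` and `g = kbar_j` these
are exactly the right-hand sides of the scalar system, which therefore says that `Z1`, `Z2` and
`Z_{j+2}` are the moments of `z*`. Because the kernel has finite rank, `∫ k(x,y) z*(y) dy` only
sees the moments `∫ kbar_i z*`, and the stationarity equations reduce to the definition of `z*`. -/

section Integral

variable {X ι : Type*} [MeasurableSpace X] {μ : Measure X} {s : Finset ι}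

theorem integral_finset_sum_const_mul (w : ι → ℝ) (f : ι → X → ℝ)
    (hf : ∀ i ∈ s, Integrable (f i) μ) :
    ∫ x, ∑ i ∈ s, w i * f i x ∂μ = ∑ i ∈ s, w i * ∫ x, f i x ∂μ := by
  rw [integral_finsetSum s fun i hi => (hf i hi).const_mul (w i)]
  simp only [integral_const_mul]

theorem integral_finiteRank_mul (u : ι → ℝ) (v : ι → X → ℝ) (z : X → ℝ)
    (hvz : ∀ i ∈ s, Integrable (fun y => v i y * z y) μ) :
    ∫ y, (∑ i ∈ s, u i * v i y) * z y ∂μ = ∑ i ∈ s, u i * ∫ y, v i y * z y ∂μ := by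
  simp_rw [Finset.sum_mul, mul_assoc]
  exact integral_finset_sum_const_mul u _ hvz

end Integral

section Profile

variable {X : Type*} [TopologicalSpace X] {S : Set X} {n : ℕ} {k : Fin n → X → ℝ} {a : X → ℝ}
  {c F : ℝ} {w : Fin n → ℝ}

theorem continuousOn_profile (hk : ∀ i, ContinuousOn (k i) S) (ha : ContinuousOn a S)
    (ha0 : ∀ x ∈ S, a x ≠ 0) (hF : F ≠ 0) :
    ContinuousOn (fun x => c * (∑ i, w i * k i x) / (F * a x)) S :=
  (continuousOn_const.mul (continuousOn_finsetSum _ fun i _ => continuousOn_const.mul (hk i))).div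
    (continuousOn_const.mul ha) fun x hx => mul_ne_zero hF (ha0 x hx)

variable [T2Space X] [MeasurableSpace X] [OpensMeasurableSpace X] {μ : Measure X}
  [IsFiniteMeasureOnCompacts μ]

theorem setIntegral_mul_profile (hS : IsCompact S) (hk : ∀ i, ContinuousOn (k i) S)
    (ha : ContinuousOn a S) (ha0 : ∀ x ∈ S, a x ≠ 0) {g : X → ℝ} (hg : ContinuousOn g S) :
    ∫ x in S, g x * (c * (∑ i, w i * k i x) / (F * a x)) ∂μ
      = c / F * ∑ i, w i * ∫ x in S, g x * k i x / a x ∂μ := by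
  have hintegrand : (fun x => g x * (c * (∑ i, w i * k i x) / (F * a x)))
      = fun x => c / F * ∑ i, w i * (g x * k i x / a x) := by
    ext x
    rw [Finset.mul_sum, Finset.sum_div, Finset.mul_sum, Finset.mul_sum]
    exact Finset.sum_congr rfl fun i _ => by ring
  rw [hintegrand, integral_const_mul, integral_finset_sum_const_mul]
  exact fun i _ => ((hg.mul (hk i)).div ha ha0).integrableOn_compact hS

theorem setIntegral_mul_profile_eq (hS : IsCompact S) (hk : ∀ i, ContinuousOn (k i) S)
    (ha : ContinuousOn a S) (ha0 : ∀ x ∈ S, a x ≠ 0) {g : X → ℝ} (hg : ContinuousOn g S)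
    (hc : c ≠ 0) (hF : F ≠ 0) {Z : ℝ}
    (hZ : F * Z / c = ∑ i, w i * ∫ x in S, g x * k i x / a x ∂μ) :
    ∫ x in S, g x * (c * (∑ i, w i * k i x) / (F * a x)) ∂μ = Z := by
  rw [setIntegral_mul_profile hS hk ha ha0 hg, ← hZ]
  field_simp

end Profile

-- `Zv i` stands for the paper's `Z_{i+2}`.
theorem scalar_system_solution_gives_stationary_state_general
    (x1 x2 : ℝ) (n : ℕ)
    (k kbar : Fin n → ℝ → ℝ)
    (hkC : ∀ i, ContinuousOn (k i) (Icc x1 x2))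
    (hkbarC : ∀ i, ContinuousOn (kbar i) (Icc x1 x2))
    (a : ℝ → ℝ) (haC : ContinuousOn a (Icc x1 x2))
    (haP : ∀ x ∈ Icc x1 x2, 0 < a x)
    (β K μ : ℝ) (hβ : 0 ≤ β)
    (F Z1 Z2 : ℝ) (Zv : Fin n → ℝ)
    (hF : 0 < F) (hZ1 : 0 < Z1)
    (heq1 : μ / K = Z2 / (1 + β * Z1))
    (heq2 : F * Z1 / (1 + β * Z1)
      = ∑ i, Zv i * ∫ x in Icc x1 x2, k i x / a x)
    (heq3 : F * Z2 / (1 + β * Z1)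
      = ∑ i, Zv i * ∫ x in Icc x1 x2, k i x)
    (heq4 : ∀ j, F * Zv j / (1 + β * Z1)
      = ∑ i, Zv i * ∫ x in Icc x1 x2, kbar j x * k i x / a x)
    (zstar : ℝ → ℝ)
    (hzstar : zstar = fun x => (1 + β * Z1) * (∑ i, Zv i * k i x) / (F * a x))
    (Fstar : ℝ) (hFstar : Fstar = F) :
    (∫ x in Icc x1 x2, zstar x) = Z1 ∧
    (∫ x in Icc x1 x2, a x * zstar x) = Z2 ∧
    (∀ j, (∫ x in Icc x1 x2, kbar j x * zstar x) = Zv j) ∧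
    (∀ x ∈ Icc x1 x2,
      (∫ y in Icc x1 x2, (∑ i, k i x * kbar i y) * zstar y)
        = Fstar * a x * zstar x / (1 + β * ∫ s in Icc x1 x2, zstar s)) ∧
    μ / K = (∫ x in Icc x1 x2, a x * zstar x)
        / (1 + β * ∫ s in Icc x1 x2, zstar s) := by
  subst hzstar Fstar
  beta_reduce
  have hc : 1 + β * Z1 ≠ 0 := by positivity
  have ha0 : ∀ x ∈ Icc x1 x2, a x ≠ 0 := fun x hx => (haP x hx).ne'
  have h1 : ∫ x in Icc x1 x2, (1 + β * Z1) * (∑ i, Zv i * k i x) / (F * a x) = Z1 := by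
    simpa only [one_mul] using setIntegral_mul_profile_eq (μ := volume) (w := Zv)
      (g := fun _ => 1) isCompact_Icc hkC haC ha0 continuousOn_const hc hF.ne'
      (by simpa only [one_mul] using heq2)
  have h2 : ∫ x in Icc x1 x2, a x * ((1 + β * Z1) * (∑ i, Zv i * k i x) / (F * a x)) = Z2 := by
    refine setIntegral_mul_profile_eq isCompact_Icc hkC haC ha0 haC hc hF.ne'
      (heq3.trans (Finset.sum_congr rfl fun i _ => congrArg _ ?_))
    exact setIntegral_congr_fun measurableSet_Icc fun x hx => by field_simp [ha0 x hx]
  have h3 := fun j =>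
    setIntegral_mul_profile_eq isCompact_Icc hkC haC ha0 (hkbarC j) hc hF.ne' (heq4 j)
  refine ⟨h1, h2, h3, fun x hx => ?_, by rw [h1, h2, heq1]⟩
  have hkbarz : ∀ i, IntegrableOn
      (fun y => kbar i y * ((1 + β * Z1) * (∑ i, Zv i * k i y) / (F * a y))) (Icc x1 x2) :=
    fun i => ((hkbarC i).mul (continuousOn_profile hkC haC ha0 hF.ne')).integrableOn_compact
      isCompact_Icc
  rw [integral_finiteRank_mul _ _ _ fun i _ => hkbarz i, h1]
  simp only [h3]
  field_simp [ha0 x hx]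
  exact Finset.sum_congr rfl fun i _ => mul_comm _ _

/-- every strictly positive solution of the `(n+3)`-dimensional
scalar stationary system for the finite-rank kernel `k(x,y) = Σ_i k_i(x) kbar_i(y)`
yields, via `z*(x) = (1+βZ1)·Σ_i Z_{i+2} k_i(x)/(F·a(x))`, a positive stationary
state of the structured predator–prey model. Here `Zv i` denotes `Z_{i+2}`. -/
theorem scalar_system_solution_gives_stationary_state
    (x1 x2 : ℝ) (hx : x1 < x2) (n : ℕ)
    (k kbar : Fin n → ℝ → ℝ)
    (hkC : ∀ i, ContinuousOn (k i) (Icc x1 x2))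
    (hkbarC : ∀ i, ContinuousOn (kbar i) (Icc x1 x2))
    (hkN : ∀ i, ∀ x ∈ Icc x1 x2, 0 ≤ k i x)
    (hkbarN : ∀ i, ∀ x ∈ Icc x1 x2, 0 ≤ kbar i x)
    (a : ℝ → ℝ) (haC : ContinuousOn a (Icc x1 x2))
    (haP : ∀ x ∈ Icc x1 x2, 0 < a x)
    (β K μ : ℝ) (hβ : 0 ≤ β) (hK : 0 < K) (hμ : 0 < μ)
    (F Z1 Z2 : ℝ) (Zv : Fin n → ℝ)
    (hF : 0 < F) (hZ1 : 0 < Z1) (hZ2 : 0 < Z2) (hZv : ∀ i, 0 < Zv i)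
    (heq1 : μ / K = Z2 / (1 + β * Z1))
    (heq2 : F * Z1 / (1 + β * Z1)
      = ∑ i, Zv i * ∫ x in Icc x1 x2, k i x / a x)
    (heq3 : F * Z2 / (1 + β * Z1)
      = ∑ i, Zv i * ∫ x in Icc x1 x2, k i x)
    (heq4 : ∀ j, F * Zv j / (1 + β * Z1)
      = ∑ i, Zv i * ∫ x in Icc x1 x2, kbar j x * k i x / a x)
    (zstar : ℝ → ℝ)
    (hzstar : zstar = fun x => (1 + β * Z1) * (∑ i, Zv i * k i x) / (F * a x))
    (Fstar : ℝ) (hFstar : Fstar = F) :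
    (∫ x in Icc x1 x2, zstar x) = Z1 ∧
    (∫ x in Icc x1 x2, a x * zstar x) = Z2 ∧
    (∀ j, (∫ x in Icc x1 x2, kbar j x * zstar x) = Zv j) ∧
    (∀ x ∈ Icc x1 x2,
      (∫ y in Icc x1 x2, (∑ i, k i x * kbar i y) * zstar y)
        = Fstar * a x * zstar x / (1 + β * ∫ s in Icc x1 x2, zstar s)) ∧
    μ / K = (∫ x in Icc x1 x2, a x * zstar x)
        / (1 + β * ∫ s in Icc x1 x2, zstar s) :=
  scalar_system_solution_gives_stationary_state_general x1 x2 n k kbar hkC hkbarC a haC haP β K μ hβ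
    F Z1 Z2 Zv hF hZ1 heq1 heq2 heq3 heq4 zstar hzstar Fstar hFstar
end

section
/- Let x1 < x2, let k : [x1,x2]² → ℝ and a : [x1,x2] → ℝ be continuous and strictly positive, and let β ≥ 0, K, μ > 0. Suppose κ* ∈ L¹(x1,x2) is strictly positive a.e. and F* > 0, Z* > 0 satisfy: κ*(x) = ((1+βZ*)/F*)·∫_{x1}^{x2} k(x,y)·κ*(y)/a(y) dy for a.e. x; F* = (K/μ)·∫_{x1}^{x2} κ*(x) dx; F* − β·∫_{x1}^{x2} κ*(x)/a(x) dx > 0; and Z* = (∫_{x1}^{x2} κ*(x)/a(x) dx)/(F* − β·∫_{x1}^{x2} κ*(x)/a(x) dx). Then, setting z*(x) = (1+βZ*)·κ*(x)/(F*·a(x)), the pair (z*, F*) is a positive stationary state of the model: z* ∈ L¹ is strictly positive a.e., ∫_{x1}^{x2} z* = Z*, ∫_{x1}^{x2} k(x,y) z*(y) dy = κ*(x) = F* a(x) z*(x)/(1 + βZ*) for a.e. x, and μ/K = (∫_{x1}^{x2} a z*)/(1 + βZ*). -/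
open MeasureTheory Set

/-! Writing `c = (1 + βZ*)/F*`, the candidate is `z* = c · κ*/a`, so every integral of `z*` is
`c` times an integral of `κ*`. The eigenvalue equation for `κ*` is then literally
`∫ k(x,y) z*(y) dy = κ*(x)`, the prey-mass equation `∫ z* = Z*` reduces to `c · ∫ κ*/a = Z*`,
which is the fixed-point relation for `Z*` because `1 + βZ* = F*/(F* - β ∫ κ*/a)`, and the
predator equation follows from `∫ a z* = c ∫ κ*` together with the relation defining `F*`. -/

theorem MeasureTheory.IntegrableOn.div_continuousOn {X : Type*} [TopologicalSpace X] [T2Space X]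
    [MeasurableSpace X] [OpensMeasurableSpace X] {μ : Measure X} {s : Set X} {f a : X → ℝ}
    (hf : IntegrableOn f s μ) (ha : ContinuousOn a s) (ha0 : ∀ x ∈ s, a x ≠ 0)
    (hs : IsCompact s) : IntegrableOn (fun x => f x / a x) s μ := by
  simp only [div_eq_mul_inv]
  exact hf.mul_continuousOn (ha.inv₀ ha0) hs

theorem one_add_mul_div_mul_eq_of_eq_div_sub {𝕜 : Type*} [Field 𝕜] {F β I Z : 𝕜} (hF : F ≠ 0)
    (hD : F - β * I ≠ 0) (hZ : Z = I / (F - β * I)) : (1 + β * Z) / F * I = Z := by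
  subst hZ
  field_simp
  ring

theorem div_eq_div_of_eq_div_mul {𝕜 : Type*} [Field 𝕜] {F K μ J : 𝕜} (hF : F ≠ 0)
    (h : F = K / μ * J) : μ / K = J / F := by
  subst h
  obtain ⟨⟨hK, hμ⟩, hJ⟩ := mul_ne_zero_iff.mp hF |>.imp_left div_ne_zero_iff.mp
  field_simp

theorem general_kernel_reformulation_gives_stationary_state_general
    (x1 x2 : ℝ)
    (k : ℝ → ℝ → ℝ)
    (a : ℝ → ℝ) (haC : ContinuousOn a (Icc x1 x2))
    (haP : ∀ x ∈ Icc x1 x2, 0 < a x)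
    (β K μ : ℝ) (hβ : 0 ≤ β)
    (κstar : ℝ → ℝ) (Fstar Zstar : ℝ)
    (hκI : IntegrableOn κstar (Icc x1 x2))
    (hκP : ∀ᵐ x ∂(volume.restrict (Icc x1 x2)), 0 < κstar x)
    (hF : 0 < Fstar) (hZ : 0 < Zstar)
    (heq1 : ∀ᵐ x ∂(volume.restrict (Icc x1 x2)),
      κstar x = ((1 + β * Zstar) / Fstar)
        * ∫ y in Icc x1 x2, k x y * κstar y / a y)
    (heq2 : Fstar = (K / μ) * ∫ x in Icc x1 x2, κstar x)
    (heq3 : 0 < Fstar - β * ∫ x in Icc x1 x2, κstar x / a x)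
    (heq4 : Zstar = (∫ x in Icc x1 x2, κstar x / a x)
        / (Fstar - β * ∫ x in Icc x1 x2, κstar x / a x))
    (zstar : ℝ → ℝ)
    (hzstar : zstar = fun x => (1 + β * Zstar) * κstar x / (Fstar * a x)) :
    IntegrableOn zstar (Icc x1 x2) ∧
    (∀ᵐ x ∂(volume.restrict (Icc x1 x2)), 0 < zstar x) ∧
    (∫ x in Icc x1 x2, zstar x) = Zstar ∧
    (∀ᵐ x ∂(volume.restrict (Icc x1 x2)),
      (∫ y in Icc x1 x2, k x y * zstar y) = κstar x ∧
      κstar x = Fstar * a x * zstar x / (1 + β * Zstar)) ∧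
    μ / K = (∫ x in Icc x1 x2, a x * zstar x) / (1 + β * Zstar) := by
  have hc : 0 < 1 + β * Zstar := by positivity
  have ha0 (x) (hx : x ∈ Icc x1 x2) : a x ≠ 0 := (haP x hx).ne'
  have hz : zstar = fun x => (1 + β * Zstar) / Fstar * (κstar x / a x) := by
    rw [hzstar]; funext x; ring
  have hkernel (x : ℝ) : (∫ y in Icc x1 x2, k x y * zstar y)
      = (1 + β * Zstar) / Fstar * ∫ y in Icc x1 x2, k x y * κstar y / a y := by
    rw [hz, ← integral_const_mul]
    congr 1 with y
    ring
  have hpredator : (∫ x in Icc x1 x2, a x * zstar x)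
      = (1 + β * Zstar) / Fstar * ∫ x in Icc x1 x2, κstar x := by
    rw [← integral_const_mul]
    refine setIntegral_congr_fun measurableSet_Icc fun x hx => ?_
    simp only [hz]; field_simp [ha0 x hx]
  refine ⟨?_, ?_, ?_, ?_, ?_⟩
  · rw [hz]
    exact (hκI.div_continuousOn haC ha0 isCompact_Icc).const_mul _
  · filter_upwards [hκP, ae_restrict_mem measurableSet_Icc] with x hκx hx
    have := haP x hx
    rw [hzstar]; positivity
  · rw [hz, integral_const_mul]
    exact one_add_mul_div_mul_eq_of_eq_div_sub hF.ne' heq3.ne' heq4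
  · filter_upwards [heq1, ae_restrict_mem measurableSet_Icc] with x hκx hx
    refine ⟨by rw [hkernel, hκx], ?_⟩
    rw [hzstar]; field_simp [ha0 x hx]
  · rw [hpredator, div_eq_div_of_eq_div_mul hF.ne' heq2]
    field_simp

/-- a positive solution `(κ*, F*, Z*)` of the reformulated
steady-state problem for a general kernel yields, via
`z*(x) = (1+βZ*)·κ*(x)/(F*·a(x))`, a positive stationary state of the model. -/
theorem general_kernel_reformulation_gives_stationary_state
    (x1 x2 : ℝ) (hx : x1 < x2)
    (k : ℝ → ℝ → ℝ)
    (hkC : ContinuousOn (Function.uncurry k) (Icc x1 x2 ×ˢ Icc x1 x2))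
    (hkP : ∀ x ∈ Icc x1 x2, ∀ y ∈ Icc x1 x2, 0 < k x y)
    (a : ℝ → ℝ) (haC : ContinuousOn a (Icc x1 x2))
    (haP : ∀ x ∈ Icc x1 x2, 0 < a x)
    (β K μ : ℝ) (hβ : 0 ≤ β) (hK : 0 < K) (hμ : 0 < μ)
    (κstar : ℝ → ℝ) (Fstar Zstar : ℝ)
    (hκI : IntegrableOn κstar (Icc x1 x2))
    (hκP : ∀ᵐ x ∂(volume.restrict (Icc x1 x2)), 0 < κstar x)
    (hF : 0 < Fstar) (hZ : 0 < Zstar)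
    (heq1 : ∀ᵐ x ∂(volume.restrict (Icc x1 x2)),
      κstar x = ((1 + β * Zstar) / Fstar)
        * ∫ y in Icc x1 x2, k x y * κstar y / a y)
    (heq2 : Fstar = (K / μ) * ∫ x in Icc x1 x2, κstar x)
    (heq3 : 0 < Fstar - β * ∫ x in Icc x1 x2, κstar x / a x)
    (heq4 : Zstar = (∫ x in Icc x1 x2, κstar x / a x)
        / (Fstar - β * ∫ x in Icc x1 x2, κstar x / a x))
    (zstar : ℝ → ℝ)
    (hzstar : zstar = fun x => (1 + β * Zstar) * κstar x / (Fstar * a x)) :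
    IntegrableOn zstar (Icc x1 x2) ∧
    (∀ᵐ x ∂(volume.restrict (Icc x1 x2)), 0 < zstar x) ∧
    (∫ x in Icc x1 x2, zstar x) = Zstar ∧
    (∀ᵐ x ∂(volume.restrict (Icc x1 x2)),
      (∫ y in Icc x1 x2, k x y * zstar y) = κstar x ∧
      κstar x = Fstar * a x * zstar x / (1 + β * Zstar)) ∧
    μ / K = (∫ x in Icc x1 x2, a x * zstar x) / (1 + β * Zstar) :=
  general_kernel_reformulation_gives_stationary_state_general x1 x2 k a haC haP β K μ hβ κstar Fstar
    Zstar hκI hκP hF hZ heq1 heq2 heq3 heq4 zstar hzstar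
end
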